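/- arXiv:1109.4675 — 7 statements merged into one kernel-verified Lean document; each statement's English description precedes it below -/
import Mathlib

section
/- Let G be a graph on n vertices and let C = v_1 v_2 ... v_k v_1 be a circular sequence of distinct vertices such that for each i (indices mod k), either v_i v_{i+1} is an edge of G or d(v_i) + d(v_{i+1}) >= n. Then G contains a cycle whose vertex set contains {v_1, ..., v_k}. -/
/-!
Add to `G` every pair `v_i v_{i+1}` of the o-cycle as an edge; in the resulting graph the `v_i`
lie on a cycle. The added edges are then removed one at a time, by Ore's argument: if
`d(x) + d(y) ≥ n` and a cycle through `S` uses the edge `xy`, deleting it leaves a path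
`x = p_0, …, p_r = y` through `S`. Either `x` and `y` have a common neighbour off the path,
or some dart `p_i p_{i+1}` has `y ~ p_i` and `x ~ p_{i+1}`, and both give a cycle through the path.
Otherwise the neighbours of `x` on the path are heads of darts, those of `y` are tails of other
darts, and their neighbours off the path are distinct, so `d(x) + d(y) ≤ r + (n - r - 1) < n`.
-/

open SimpleGraph

lemma Nat.add_one_mod_ne_self {i k : ℕ} (hk : 2 ≤ k) (hi : i < k) : (i + 1) % k ≠ i := by
  rcases (show i + 1 ≤ k from hi).eq_or_lt with hik | hik
  · rw [hik, Nat.mod_self]; omega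
  · rw [Nat.mod_eq_of_lt hik]; omega

namespace SimpleGraph

variable {V : Type*} {G : SimpleGraph V}

def HasCycleThrough (G : SimpleGraph V) (S : Set V) : Prop :=
  ∃ (a : V) (c : G.Walk a a), c.IsCycle ∧ ∀ x ∈ S, x ∈ c.support

namespace Walk

variable {u v w : V}

lemma IsPath.isCycle_cons {p : G.Walk v u} (hp : p.IsPath) (h : G.Adj u v)
    (hlen : 2 ≤ p.length) : (cons h p).IsCycle :=
  isCycle_iff_isPath_tail_and_le_length.mpr ⟨by simpa using hp, by rw [length_cons]; omega⟩

lemma IsPath.hasCycleThrough_of_adj_of_adj {p : G.Walk u w} (hp : p.IsPath) (hlen : 1 ≤ p.length)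
    {z : V} (hz : z ∉ p.support) (hwz : G.Adj w z) (hzu : G.Adj z u) :
    G.HasCycleThrough {x | x ∈ p.support} :=
  ⟨z, cons hzu (p.concat hwz), (hp.concat hz hwz).isCycle_cons hzu (by rw [length_concat]; omega),
    fun x (hx : x ∈ p.support) => by simp [support_concat, hx]⟩

lemma IsPath.hasCycleThrough_of_mem_darts {p : G.Walk u w} (hp : p.IsPath) (hlen : 2 ≤ p.length)
    {d : G.Dart} (hd : d ∈ p.darts) (hu : G.Adj u d.snd) (hw : G.Adj w d.fst) :
    G.HasCycleThrough {x | x ∈ p.support} := by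
  obtain ⟨q, r, rfl⟩ :
      ∃ (q : G.Walk u d.fst) (r : G.Walk d.snd w), p = q.append (cons d.adj r) := by
    obtain ⟨q, r, hqr⟩ := (isSubwalk_toWalk_adj_iff_mem_darts p).mpr hd
    exact ⟨q, r, by rw [hqr, ← append_assoc]; rfl⟩
  have hperm : (r.append (cons hw q.reverse)).support.Perm (q.append (cons d.adj r)).support := by
    simpa [support_append] using (List.perm_append_comm.trans
      (List.Perm.append_right _ (List.reverse_perm _)))
  -- the cycle `u → d.snd ⋯ w → d.fst ⋯ u`, running along `r` forwards and `q` backwards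
  refine ⟨u, cons hu (r.append (cons hw q.reverse)), IsPath.isCycle_cons ?_ hu ?_,
    fun x hx => ?_⟩
  · exact (isPath_def _).mpr (hperm.nodup_iff.mpr hp.support_nodup)
  · simp only [length_append, length_cons, length_reverse] at hlen ⊢; omega
  · exact List.mem_cons_of_mem _ (hperm.mem_iff.mpr hx)

lemma exists_mem_darts_snd_eq {p : G.Walk u w} {x : V} (hx : x ∈ p.support) (hxu : x ≠ u) :
    ∃ d ∈ p.darts, d.snd = x := by
  rw [← cons_tail_support, List.mem_cons] at hx
  simpa [← map_snd_darts] using hx.resolve_left hxu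

lemma exists_mem_darts_fst_eq {p : G.Walk u w} {x : V} (hx : x ∈ p.support) (hxw : x ≠ w) :
    ∃ d ∈ p.darts, d.fst = x := by
  rw [← dropLast_support_concat, List.mem_append, List.mem_singleton] at hx
  simpa [← map_fst_darts] using hx.resolve_right hxw

lemma card_neighborFinset_inter_support_add_le [Fintype V] [DecidableEq V] [DecidableRel G.Adj]
    (p : G.Walk u w) (hcross : ∀ d ∈ p.darts, ¬(G.Adj u d.snd ∧ G.Adj w d.fst)) :
    (G.neighborFinset u ∩ p.support.toFinset).card +
      (G.neighborFinset w ∩ p.support.toFinset).card ≤ p.length := by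
  set D := p.darts.toFinset
  have hu : G.neighborFinset u ∩ p.support.toFinset ⊆
      (D.filter (G.Adj u ·.snd)).image (·.snd) := by
    intro x hx
    simp only [Finset.mem_inter, mem_neighborFinset, List.mem_toFinset] at hx
    obtain ⟨d, hd, rfl⟩ := exists_mem_darts_snd_eq hx.2 hx.1.ne'
    exact Finset.mem_image_of_mem _ (Finset.mem_filter.mpr ⟨List.mem_toFinset.mpr hd, hx.1⟩)
  have hw : G.neighborFinset w ∩ p.support.toFinset ⊆
      (D.filter (G.Adj w ·.fst)).image (·.fst) := by
    intro x hx
    simp only [Finset.mem_inter, mem_neighborFinset, List.mem_toFinset] at hx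
    obtain ⟨d, hd, rfl⟩ := exists_mem_darts_fst_eq hx.2 hx.1.ne'
    exact Finset.mem_image_of_mem _ (Finset.mem_filter.mpr ⟨List.mem_toFinset.mpr hd, hx.1⟩)
  have hdisj : Disjoint (D.filter (G.Adj u ·.snd)) (D.filter (G.Adj w ·.fst)) :=
    Finset.disjoint_filter.mpr fun d hd hu hw => hcross d (List.mem_toFinset.mp hd) ⟨hu, hw⟩
  calc _ ≤ (D.filter (G.Adj u ·.snd)).card + (D.filter (G.Adj w ·.fst)).card :=
        add_le_add ((Finset.card_le_card hu).trans Finset.card_image_le)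
          ((Finset.card_le_card hw).trans Finset.card_image_le)
    _ ≤ D.card := by
        rw [← Finset.card_union_of_disjoint hdisj]
        exact Finset.card_le_card (Finset.union_subset (Finset.filter_subset _ _)
          (Finset.filter_subset _ _))
    _ ≤ p.length := (List.toFinset_card_le _).trans_eq (length_darts p)

lemma IsPath.degree_add_degree_lt [Fintype V] [DecidableRel G.Adj] {p : G.Walk u w}
    (hp : p.IsPath) (hout : ∀ z ∉ p.support, ¬(G.Adj w z ∧ G.Adj z u))
    (hcross : ∀ d ∈ p.darts, ¬(G.Adj u d.snd ∧ G.Adj w d.fst)) :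
    G.degree u + G.degree w < Fintype.card V := by
  classical
  set P := p.support.toFinset
  have hP : P.card = p.length + 1 := by
    rw [List.toFinset_card_of_nodup hp.support_nodup, length_support]
  have hdisj : Disjoint (G.neighborFinset u \ P) (G.neighborFinset w \ P) := by
    refine Finset.disjoint_left.mpr fun z hzu hzw => ?_
    simp only [Finset.mem_sdiff, mem_neighborFinset, P, List.mem_toFinset] at hzu hzw
    exact hout z hzu.2 ⟨hzw.1, hzu.1.symm⟩
  have hsub : ∀ s : Finset V, s \ P ⊆ Pᶜ := fun s => by
    rw [Finset.sdiff_eq_inter_compl]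
    exact Finset.inter_subset_right
  have houtside : (G.neighborFinset u \ P).card + (G.neighborFinset w \ P).card ≤ Pᶜ.card := by
    rw [← Finset.card_union_of_disjoint hdisj]
    exact Finset.card_le_card (Finset.union_subset (hsub _) (hsub _))
  have hinside : (G.neighborFinset u ∩ P).card + (G.neighborFinset w ∩ P).card ≤ p.length :=
    card_neighborFinset_inter_support_add_le p hcross
  have hsplit_u := Finset.card_inter_add_card_sdiff (G.neighborFinset u) P
  have hsplit_w := Finset.card_inter_add_card_sdiff (G.neighborFinset w) P
  rw [Finset.card_compl] at houtside
  have hPcard := P.card_le_univ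
  rw [← card_neighborFinset_eq_degree, ← card_neighborFinset_eq_degree]
  omega

lemma IsPath.hasCycleThrough_support [Fintype V] [DecidableRel G.Adj] {p : G.Walk u w}
    (hp : p.IsPath) (hlen : 2 ≤ p.length) (hdeg : Fintype.card V ≤ G.degree u + G.degree w) :
    G.HasCycleThrough {x | x ∈ p.support} := by
  by_contra h
  refine (hp.degree_add_degree_lt (fun z hz hadj => h ?_) (fun d hd hadj => h ?_)).not_ge hdeg
  · exact hp.hasCycleThrough_of_adj_of_adj (by omega) hz hadj.1 hadj.2
  · exact hp.hasCycleThrough_of_mem_darts hlen hd hadj.1 hadj.2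

lemma IsCycle.exists_isPath_of_mem_edges {a x y : V} {c : G.Walk a a} (hc : c.IsCycle)
    (he : s(x, y) ∈ c.edges) :
    ∃ p : G.Walk y x, p.IsPath ∧ s(x, y) ∉ p.edges ∧ 2 ≤ p.length ∧
      ∀ t ∈ c.support, t ∈ p.support := by
  classical
  have hx : x ∈ c.support := fst_mem_support_of_mem_edges c he
  obtain ⟨c', hc', hsnd, hverts⟩ := (hc.rotate hx).exists_isCycle_snd_verts_eq
    (by rwa [toSubgraph_rotate, adj_toSubgraph_iff_mem_edges])
  cases c' with
  | nil => exact absurd hc' not_isCycle_nil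
  | cons h q =>
    rw [snd_cons] at hsnd
    subst hsnd
    obtain ⟨hq, hqe⟩ := (cons_isCycle_iff q h).mp hc'
    refine ⟨q, hq, hqe, by simpa using hc'.three_le_length, fun t ht => ?_⟩
    have : t ∈ (cons h q).toSubgraph.verts := by
      rw [hverts, toSubgraph_rotate]
      exact c.mem_verts_toSubgraph.mpr ht
    rw [mem_verts_toSubgraph, support_cons, List.mem_cons] at this
    exact this.elim (· ▸ q.end_mem_support) id

end Walk

lemma HasCycleThrough.of_sup_edge [Fintype V] [DecidableRel G.Adj] {S : Set V} {x y : V}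
    (hdeg : Fintype.card V ≤ G.degree x + G.degree y) (h : (G ⊔ edge x y).HasCycleThrough S) :
    G.HasCycleThrough S := by
  obtain ⟨a, c, hc, hS⟩ := h
  have hG : ∀ e ∈ (G ⊔ edge x y).edgeSet, e ≠ s(x, y) → e ∈ G.edgeSet := by
    intro e he hne
    simp only [edgeSet_sup, edgeSet_edge, Set.mem_union, Set.mem_sdiff,
      Set.mem_singleton_iff] at he
    tauto
  by_cases he : s(x, y) ∈ c.edges
  · obtain ⟨p, hp, hpe, hlen, hsupp⟩ := hc.exists_isPath_of_mem_edges he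
    have hpG : ∀ e ∈ p.edges, e ∈ G.edgeSet := fun e he' =>
      hG e (p.edges_subset_edgeSet he') (ne_of_mem_of_not_mem he' hpe)
    obtain ⟨b, c', hc', hS'⟩ := (hp.transfer hpG).hasCycleThrough_support
      (by rwa [Walk.length_transfer]) (by omega)
    exact ⟨b, c', hc', fun z hz => hS' z (by simpa using hsupp z (hS z hz))⟩
  · have hcG : ∀ e ∈ c.edges, e ∈ G.edgeSet := fun e he' =>
      hG e (c.edges_subset_edgeSet he') (ne_of_mem_of_not_mem he' he)
    exact ⟨a, c.transfer G hcG, hc.transfer hcG, by simpa using hS⟩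

lemma HasCycleThrough.of_sup_fromEdgeSet [Fintype V] [DecidableRel G.Adj] {S : Set V}
    (F : Finset (Sym2 V))
    (hF : ∀ x y, s(x, y) ∈ F → G.Adj x y ∨ Fintype.card V ≤ G.degree x + G.degree y)
    (h : (G ⊔ fromEdgeSet ↑F).HasCycleThrough S) : G.HasCycleThrough S := by
  classical
  induction F using Finset.induction_on with
  | empty => simpa using h
  | insert e F _ ih =>
    induction e using Sym2.ind with
    | _ x y =>
    have hK : G ⊔ fromEdgeSet ↑(insert s(x, y) F) = (G ⊔ fromEdgeSet ↑F) ⊔ edge x y := by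
      rw [Finset.coe_insert, Set.insert_eq, fromEdgeSet_union, sup_comm (fromEdgeSet _),
        ← sup_assoc, edge]
    rw [hK] at h
    refine ih (fun a b hab => hF a b (Finset.mem_insert_of_mem hab)) ?_
    rcases hF x y (Finset.mem_insert_self _ _) with hadj | hdeg
    · rwa [sup_edge_of_adj _ (Or.inl hadj)] at h
    · refine h.of_sup_edge (hdeg.trans (add_le_add ?_ ?_)) <;> exact degree_le_of_le le_sup_left

lemma hasCycleThrough_of_adj_succ_mod {k : ℕ} (hk : 3 ≤ k) {v : ℕ → V}
    (hinj : Set.InjOn v (Set.Iio k)) (hadj : ∀ i < k, G.Adj (v i) (v ((i + 1) % k))) :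
    G.HasCycleThrough (v '' Set.Iio k) := by
  set l := (List.range k).map v
  have hne : l ≠ [] := by simp only [l, ne_eq, List.map_eq_nil_iff, List.range_eq_nil]; omega
  have hchain : l.IsChain G.Adj := by
    refine List.isChain_map_of_isChain v (fun _ _ h => h)
      ((List.isChain_range _ _).mpr fun i hi => ?_)
    simpa [Nat.mod_eq_of_lt (show i + 1 < k by omega)] using hadj i (by omega)
  have hhead : l.head hne = v 0 := by simp [l]
  have hlast : l.getLast hne = v (k - 1) := by simp [l]
  have hclose : G.Adj (v (k - 1)) (v 0) := by
    simpa [Nat.sub_add_cancel (show 1 ≤ k by omega)] using hadj (k - 1) (by omega)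
  set p := (Walk.ofSupport l hne hchain).copy hhead hlast
  have hsupp : p.support = l := by simp only [p, Walk.support_copy, Walk.support_ofSupport]
  have hp : p.IsPath := by
    rw [Walk.isPath_def, hsupp]
    exact List.Nodup.map_on (fun i hi j hj => hinj (by simpa using hi) (by simpa using hj))
      List.nodup_range
  refine ⟨_, Walk.cons hclose p, hp.isCycle_cons hclose ?_, ?_⟩
  · simp only [p, l, Walk.length_copy, Walk.length_ofSupport, List.length_map, List.length_range]
    omega
  · rintro _ ⟨i, hi, rfl⟩
    rw [Walk.support_cons, hsupp]
    exact List.mem_cons_of_mem _ (List.mem_map_of_mem (List.mem_range.mpr hi))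

end SimpleGraph

theorem stmt_1 {V : Type*} [Fintype V] [DecidableEq V] (G : SimpleGraph V)
    [DecidableRel G.Adj] (k : ℕ) (hk : 3 ≤ k) (v : ℕ → V)
    (hinj : ∀ i j, i < k → j < k → v i = v j → i = j)
    (hoc : ∀ i < k, G.Adj (v i) (v ((i + 1) % k)) ∨
      Fintype.card V ≤ G.degree (v i) + G.degree (v ((i + 1) % k))) :
    ∃ (a : V) (c : G.Walk a a), c.IsCycle ∧ ∀ i < k, v i ∈ c.support := by
  have hne : ∀ i < k, v i ≠ v ((i + 1) % k) := fun i hi heq =>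
    Nat.add_one_mod_ne_self (by omega) hi (hinj _ _ hi (Nat.mod_lt _ (by omega)) heq).symm
  set F := (Finset.range k).image fun i => s(v i, v ((i + 1) % k))
  have hF : ∀ x y, s(x, y) ∈ F → G.Adj x y ∨ Fintype.card V ≤ G.degree x + G.degree y := by
    intro x y hxy
    obtain ⟨i, hi, he⟩ := Finset.mem_image.mp hxy
    rcases Sym2.eq_iff.mp he with ⟨rfl, rfl⟩ | ⟨rfl, rfl⟩
    · exact hoc i (Finset.mem_range.mp hi)
    · exact (hoc i (Finset.mem_range.mp hi)).imp (fun h => h.symm) (fun h => by omega)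
  have hH : (G ⊔ fromEdgeSet ↑F).HasCycleThrough (v '' Set.Iio k) :=
    hasCycleThrough_of_adj_succ_mod hk (fun i hi j hj => hinj i j hi hj) fun i hi =>
      Or.inr ⟨Finset.mem_image_of_mem _ (Finset.mem_range.mpr hi), hne i hi⟩
  obtain ⟨a, c, hc, hS⟩ := hH.of_sup_fromEdgeSet F hF
  exact ⟨a, c, hc, fun i hi => hS _ ⟨i, hi, rfl⟩⟩
end

section
/- Let G be a connected graph on n vertices containing no heavy cycle, and suppose G has exactly one heavy vertex x. Then G - x has at least n/2 connected components, and each component of G - x contains exactly one neighbor of x. -/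
/-!
Since `x` is the only heavy vertex, a heavy cycle is just a cycle through `x`. If two distinct
neighbours `u, v` of `x` lay in one component of `G - x`, a `u`–`v` path there closed up by the
edges `xu`, `xv` would be such a cycle; and connectivity of `G` puts a neighbour of `x` in every
component of `G - x`. So the components of `G - x` correspond bijectively to the neighbours of
`x`, of which there are at least `n / 2`.
-/

open SimpleGraph

namespace SimpleGraph

variable {V : Type*} {G : SimpleGraph V} {x : V}

lemma Walk.exists_adj_reachable_induce_ne {a b : V} (w : G.Walk a b) (hb : b = x) (ha : a ≠ x) :
    ∃ v : {u | u ≠ x}, G.Adj x v ∧ (G.induce {u | u ≠ x}).Reachable ⟨a, ha⟩ v := by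
  induction w with
  | nil => exact absurd hb ha
  | @cons a c b hac w ih =>
    by_cases hc : c = x
    · subst hc
      exact ⟨⟨a, ha⟩, hac.symm, .refl _⟩
    · obtain ⟨v, hxv, hcv⟩ := ih hb hc
      have hac' : (G.induce {u | u ≠ x}).Adj ⟨a, ha⟩ ⟨c, hc⟩ := hac
      exact ⟨v, hxv, hac'.reachable.trans hcv⟩

lemma Connected.exists_adj_connectedComponentMk_induce_ne_eq (hG : G.Connected)
    (c : (G.induce {u | u ≠ x}).ConnectedComponent) :
    ∃ u : {u | u ≠ x}, (G.induce {u | u ≠ x}).connectedComponentMk u = c ∧ G.Adj x u := by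
  obtain ⟨a, rfl⟩ := c.exists_rep
  obtain ⟨v, hxv, hav⟩ := (hG.preconnected a x).some.exists_adj_reachable_induce_ne rfl a.2
  exact ⟨v, ConnectedComponent.sound hav.symm, hxv⟩

lemma exists_isCycle_of_adj_of_reachable_induce_ne {u v : {u | u ≠ x}} (hxu : G.Adj x u)
    (hxv : G.Adj x v) (huv : u ≠ v) (h : (G.induce {u | u ≠ x}).Reachable u v) :
    ∃ c : G.Walk x x, c.IsCycle := by
  obtain ⟨p, hp⟩ := h.exists_isPath
  have hxp : x ∉ (p.map (Embedding.induce _).toHom).support := by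
    rw [Walk.support_map, List.mem_map]
    rintro ⟨w, -, hw⟩
    exact w.2 hw
  obtain ⟨P, hP, hxP⟩ : ∃ P : G.Walk u v, P.IsPath ∧ x ∉ P.support :=
    ⟨_, hp.map Subtype.val_injective, hxp⟩
  refine ⟨.cons hxu (P.concat hxv.symm), (Walk.cons_isCycle_iff _ hxu).2 ⟨?_, ?_⟩⟩
  · rw [← Walk.isPath_reverse_iff, Walk.reverse_concat, Walk.cons_isPath_iff,
      Walk.support_reverse, List.mem_reverse]
    exact ⟨hP.reverse, hxP⟩
  · rw [Walk.edges_concat, List.concat_eq_append, List.mem_append, List.mem_singleton,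
      Sym2.eq_iff]
    rintro (he | ⟨hvx, -⟩ | ⟨-, hvu⟩)
    · exact hxP (P.fst_mem_support_of_mem_edges he)
    · exact v.2 hvx.symm
    · exact huv (Subtype.ext hvu)

lemma eq_of_adj_of_connectedComponentMk_induce_ne_eq (hx : ∀ c : G.Walk x x, ¬ c.IsCycle)
    {u v : {u | u ≠ x}} (hxu : G.Adj x u) (hxv : G.Adj x v)
    (huv : (G.induce {u | u ≠ x}).connectedComponentMk u =
      (G.induce {u | u ≠ x}).connectedComponentMk v) : u = v := by
  by_contra hne
  obtain ⟨c, hc⟩ :=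
    exists_isCycle_of_adj_of_reachable_induce_ne hxu hxv hne (ConnectedComponent.exact huv)
  exact hx c hc

lemma degree_le_card_connectedComponent_induce_ne [Finite V] [Fintype (G.neighborSet x)]
    (hx : ∀ c : G.Walk x x, ¬ c.IsCycle) :
    G.degree x ≤ Nat.card (G.induce {u | u ≠ x}).ConnectedComponent := by
  have hne (v : G.neighborSet x) : (v : V) ≠ x := (G.ne_of_adj v.2).symm
  rw [← card_neighborSet_eq_degree, ← Nat.card_eq_fintype_card]
  refine Nat.card_le_card_of_injective
    (fun v => (G.induce {u | u ≠ x}).connectedComponentMk ⟨v, hne v⟩) fun a b hab => ?_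
  have := eq_of_adj_of_connectedComponentMk_induce_ne_eq hx
    ((G.mem_neighborSet x a).1 a.2) ((G.mem_neighborSet x b).1 b.2) hab
  exact Subtype.ext (Subtype.mk.inj this)

end SimpleGraph

theorem stmt_4_general {V : Type*} [Fintype V] (G : SimpleGraph V)
    [DecidableRel G.Adj] (hconn : G.Connected) (x : V)
    (hx : ∀ v : V, (Fintype.card V ≤ 2 * G.degree v) ↔ v = x)
    (hnoheavy : ¬ ∃ (a : V) (c : G.Walk a a), c.IsCycle ∧
      ∀ v : V, Fintype.card V ≤ 2 * G.degree v → v ∈ c.support) :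
    Fintype.card V ≤ 2 * Nat.card ((G.induce {u | u ≠ x}).ConnectedComponent) ∧
    ∀ c : (G.induce {u | u ≠ x}).ConnectedComponent,
      ∃! u : {u | u ≠ x}, (G.induce {u | u ≠ x}).connectedComponentMk u = c ∧
        G.Adj x ↑u := by
  have hcyc (c : G.Walk x x) : ¬ c.IsCycle := fun hc =>
    hnoheavy ⟨x, c, hc, fun v hv => (hx v).1 hv ▸ c.start_mem_support⟩
  refine ⟨((hx x).2 rfl).trans ?_, fun c => ?_⟩
  · grw [degree_le_card_connectedComponent_induce_ne hcyc]
  · obtain ⟨u, huc, hxu⟩ := hconn.exists_adj_connectedComponentMk_induce_ne_eq c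
    exact ⟨u, ⟨huc, hxu⟩, fun v ⟨hvc, hxv⟩ =>
      eq_of_adj_of_connectedComponentMk_induce_ne_eq hcyc hxv hxu (hvc.trans huc.symm)⟩

theorem stmt_4 {V : Type*} [Fintype V] [DecidableEq V] (G : SimpleGraph V)
    [DecidableRel G.Adj] (hconn : G.Connected) (x : V)
    (hx : ∀ v : V, (Fintype.card V ≤ 2 * G.degree v) ↔ v = x)
    (hnoheavy : ¬ ∃ (a : V) (c : G.Walk a a), c.IsCycle ∧
      ∀ v : V, Fintype.card V ≤ 2 * G.degree v → v ∈ c.support) :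
    Fintype.card V ≤ 2 * Nat.card ((G.induce {u | u ≠ x}).ConnectedComponent) ∧
    ∀ c : (G.induce {u | u ≠ x}).ConnectedComponent,
      ∃! u : {u | u ≠ x}, (G.induce {u | u ≠ x}).connectedComponentMk u = c ∧
        G.Adj x ↑u :=
  stmt_4_general G hconn x hx hnoheavy
end

section
/- Let G be a connected graph on n vertices containing no heavy cycle, with exactly two heavy vertices x and y. Then xy is a cut edge of G, n is even, the two components of G - xy each have exactly n/2 vertices, and x is adjacent to every other vertex of its component and y is adjacent to every other vertex of its component. -/
/-! Since x and y are the only heavy vertices, no cycle passes through both of them. If they were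
not adjacent, then `deg x + deg y ≥ n` would give them two common neighbours z, w, and x z y w
would be such a cycle. So xy is an edge on no cycle, i.e. a cut edge, and then x and y have no
common neighbour at all. Hence `deg x + deg y ≤ n`, which forces `deg x = deg y = n / 2` and
every vertex to be adjacent to x or to y; the component of x in `G - xy` is x together with its
other neighbours, and likewise for y. -/

open SimpleGraph

namespace SimpleGraph

variable {V : Type*} {G : SimpleGraph V} {x y z w : V}

lemma Walk.isCycle_cons_four (hxz : G.Adj x z) (hzy : G.Adj z y) (hyw : G.Adj y w)
    (hwx : G.Adj w x) (hxy : x ≠ y) (hzw : z ≠ w) :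
    (Walk.cons hxz (Walk.cons hzy (Walk.cons hyw (Walk.cons hwx Walk.nil)))).IsCycle := by
  have := hxz.ne; have := hzy.ne; have := hyw.ne; have := hwx.ne
  simp [Walk.isCycle_def, Walk.isTrail_def, Sym2.eq, Sym2.rel_iff', List.nodup_cons]
  aesop

lemma deleteEdges_edge_adj_left {v : V} :
    (G.deleteEdges {s(x, y)}).Adj x v ↔ G.Adj x v ∧ v ≠ y := by
  rw [deleteEdges_adj, Set.mem_singleton_iff, Sym2.congr_right]

lemma deleteEdges_edge_adj_right {v : V} :
    (G.deleteEdges {s(x, y)}).Adj y v ↔ G.Adj y v ∧ v ≠ x := by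
  rw [Sym2.eq_swap, deleteEdges_edge_adj_left]

lemma reachable_iff_mem_of_not_reachable {S T : Set V} (hxy : ¬ G.Reachable x y)
    (hcover : ∀ v, v ∈ S ∨ v ∈ T) (hS : ∀ v ∈ S, G.Reachable x v)
    (hT : ∀ v ∈ T, G.Reachable y v) (v : V) : G.Reachable x v ↔ v ∈ S :=
  ⟨fun hv => (hcover v).resolve_right fun hvT => hxy (hv.trans (hT v hvT).symm), hS v⟩

lemma reachable_deleteEdges_iff (hcut : ¬ (G.deleteEdges {s(x, y)}).Reachable x y)
    (hcover : ∀ v, G.Adj x v ∨ G.Adj y v) (v : V) :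
    (G.deleteEdges {s(x, y)}).Reachable x v ↔ v = x ∨ (G.Adj x v ∧ v ≠ y) := by
  refine reachable_iff_mem_of_not_reachable (S := {v | v = x ∨ (G.Adj x v ∧ v ≠ y)})
    (T := {v | v = y ∨ (G.Adj y v ∧ v ≠ x)}) hcut (fun v => ?_) ?_ ?_ v
  · by_cases hvx : v = x
    · exact Or.inl (Or.inl hvx)
    by_cases hvy : v = y
    · exact Or.inr (Or.inl hvy)
    exact (hcover v).imp (fun h => Or.inr ⟨h, hvy⟩) (fun h => Or.inr ⟨h, hvx⟩)
  · rintro v (rfl | hv)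
    exacts [Reachable.refl _, (deleteEdges_edge_adj_left.2 hv).reachable]
  · rintro v (rfl | hv)
    exacts [Reachable.refl _, (deleteEdges_edge_adj_right.2 hv).reachable]

lemma disjoint_neighborFinset_of_not_reachable [Fintype (G.neighborSet x)]
    [Fintype (G.neighborSet y)] (hcut : ¬ (G.deleteEdges {s(x, y)}).Reachable x y) :
    Disjoint (G.neighborFinset x) (G.neighborFinset y) := by
  refine Finset.disjoint_left.2 fun z hxz hyz => ?_
  rw [mem_neighborFinset] at hxz hyz
  exact hcut <| (deleteEdges_edge_adj_left.2 ⟨hxz, hyz.ne'⟩).reachable.trans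
    (deleteEdges_edge_adj_right.2 ⟨hyz, hxz.ne'⟩).reachable.symm

variable [Fintype V] [DecidableRel G.Adj]

lemma two_le_card_inter_neighborFinset [DecidableEq V] (hxy : x ≠ y) (hnadj : ¬ G.Adj x y)
    (hdeg : Fintype.card V ≤ G.degree x + G.degree y) :
    2 ≤ (G.neighborFinset x ∩ G.neighborFinset y).card := by
  have hsub : G.neighborFinset x ∪ G.neighborFinset y ⊆ Finset.univ \ {x, y} := by
    intro v hv
    simp only [Finset.mem_union, mem_neighborFinset] at hv
    simp only [Finset.mem_sdiff, Finset.mem_univ, Finset.mem_insert, Finset.mem_singleton,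
      true_and, not_or]
    rcases hv with h | h
    · exact ⟨h.ne', fun hvy => hnadj (hvy ▸ h)⟩
    · exact ⟨fun hvx => hnadj (hvx ▸ h.symm), h.ne'⟩
  have hcard := Finset.card_le_card hsub
  rw [Finset.card_univ_sdiff, Finset.card_pair hxy] at hcard
  have := Finset.card_union_add_card_inter (G.neighborFinset x) (G.neighborFinset y)
  rw [card_neighborFinset_eq_degree, card_neighborFinset_eq_degree] at this
  have htwo := Finset.card_le_univ ({x, y} : Finset V)
  rw [Finset.card_pair hxy] at htwo
  omega

lemma degree_add_degree_le_of_disjoint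
    (hdisj : Disjoint (G.neighborFinset x) (G.neighborFinset y)) :
    G.degree x + G.degree y ≤ Fintype.card V := by
  classical
  rw [← card_neighborFinset_eq_degree, ← card_neighborFinset_eq_degree,
    ← Finset.card_union_of_disjoint hdisj]
  exact Finset.card_le_univ _

lemma adj_or_adj_of_disjoint (hdisj : Disjoint (G.neighborFinset x) (G.neighborFinset y))
    (hdeg : Fintype.card V ≤ G.degree x + G.degree y) (v : V) : G.Adj x v ∨ G.Adj y v := by
  classical
  have huniv : G.neighborFinset x ∪ G.neighborFinset y = Finset.univ := by
    apply Finset.eq_univ_of_card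
    rw [Finset.card_union_of_disjoint hdisj, card_neighborFinset_eq_degree,
      card_neighborFinset_eq_degree]
    exact le_antisymm (degree_add_degree_le_of_disjoint hdisj) hdeg
  simpa using huniv.ge (Finset.mem_univ v)

lemma ncard_supp_connectedComponentMk_deleteEdges (hadj : G.Adj x y)
    (hcut : ¬ (G.deleteEdges {s(x, y)}).Reachable x y) (hcover : ∀ v, G.Adj x v ∨ G.Adj y v) :
    ((G.deleteEdges {s(x, y)}).connectedComponentMk x).supp.ncard = G.degree x := by
  classical
  have hsupp : ((G.deleteEdges {s(x, y)}).connectedComponentMk x).supp =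
      ↑(insert x ((G.neighborFinset x).erase y)) := by
    ext v
    simp [ConnectedComponent.mem_supp_iff, ConnectedComponent.eq, reachable_comm,
      reachable_deleteEdges_iff hcut hcover, and_comm]
  rw [hsupp, Set.ncard_coe_finset, Finset.card_insert_of_notMem (by simp),
    Finset.card_erase_of_mem ((mem_neighborFinset _ _ _).2 hadj), card_neighborFinset_eq_degree]
  have := G.degree_pos_iff_exists_adj x |>.2 ⟨y, hadj⟩
  omega

end SimpleGraph

theorem stmt_5_general {V : Type*} [Fintype V] (G : SimpleGraph V)
    [DecidableRel G.Adj] (x y : V) (hxy : x ≠ y)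
    (hheavy : ∀ v : V, (Fintype.card V ≤ 2 * G.degree v) ↔ (v = x ∨ v = y))
    (hnoheavy : ¬ ∃ (a : V) (c : G.Walk a a), c.IsCycle ∧
      ∀ v : V, Fintype.card V ≤ 2 * G.degree v → v ∈ c.support) :
    G.Adj x y ∧
    ¬ (G.deleteEdges {s(x, y)}).Connected ∧
    Even (Fintype.card V) ∧
    2 * ((G.deleteEdges {s(x, y)}).connectedComponentMk x).supp.ncard = Fintype.card V ∧
    2 * ((G.deleteEdges {s(x, y)}).connectedComponentMk y).supp.ncard = Fintype.card V ∧
    (∀ u : V, u ≠ x → (G.deleteEdges {s(x, y)}).Reachable x u → G.Adj x u) ∧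
    (∀ u : V, u ≠ y → (G.deleteEdges {s(x, y)}).Reachable y u → G.Adj y u) := by
  classical
  have hdx : Fintype.card V ≤ 2 * G.degree x := (hheavy x).2 (Or.inl rfl)
  have hdy : Fintype.card V ≤ 2 * G.degree y := (hheavy y).2 (Or.inr rfl)
  have hcycle {a : V} (c : G.Walk a a) (hc : c.IsCycle) (hx : x ∈ c.support)
      (hy : y ∈ c.support) : False :=
    hnoheavy ⟨a, c, hc, fun v hv => by rcases (hheavy v).1 hv with rfl | rfl <;> assumption⟩
  have hadj : G.Adj x y := by
    by_contra hnadj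
    obtain ⟨z, hz, w, hw, hzw⟩ :=
      Finset.one_lt_card.1 (two_le_card_inter_neighborFinset hxy hnadj (by omega))
    simp only [Finset.mem_inter, mem_neighborFinset] at hz hw
    exact hcycle _ (Walk.isCycle_cons_four hz.1 hz.2.symm hw.2 hw.1.symm hxy hzw) (by simp)
      (by simp)
  have hcut : ¬ (G.deleteEdges {s(x, y)}).Reachable x y := fun hr => by
    obtain ⟨u, c, hc, he⟩ := adj_and_reachable_delete_edges_iff_exists_cycle.1 ⟨hadj, hr⟩
    exact hcycle c hc (c.fst_mem_support_of_mem_edges he) (c.snd_mem_support_of_mem_edges he)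
  have hswap : G.deleteEdges {s(y, x)} = G.deleteEdges {s(x, y)} := by rw [Sym2.eq_swap]
  have hcut' : ¬ (G.deleteEdges {s(y, x)}).Reachable y x := hswap ▸ fun h => hcut h.symm
  have hdisj := disjoint_neighborFinset_of_not_reachable hcut
  have hsum := degree_add_degree_le_of_disjoint hdisj
  have hcover := adj_or_adj_of_disjoint hdisj (by omega)
  have hcover' (v : V) : G.Adj y v ∨ G.Adj x v := (hcover v).symm
  have hcard_y := ncard_supp_connectedComponentMk_deleteEdges hadj.symm hcut' hcover'
  have hreach_y := reachable_deleteEdges_iff hcut' hcover'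
  rw [hswap] at hcard_y hreach_y
  refine ⟨hadj, fun h => hcut (h.preconnected x y), ⟨G.degree x, by omega⟩,
    by rw [ncard_supp_connectedComponentMk_deleteEdges hadj hcut hcover]; omega,
    by omega, fun u hu hr => ?_, fun u hu hr => ?_⟩
  · exact ((reachable_deleteEdges_iff hcut hcover u).1 hr).resolve_left hu |>.1
  · exact ((hreach_y u).1 hr).resolve_left hu |>.1

theorem stmt_5 {V : Type*} [Fintype V] [DecidableEq V] (G : SimpleGraph V)
    [DecidableRel G.Adj] (hconn : G.Connected) (x y : V) (hxy : x ≠ y)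
    (hheavy : ∀ v : V, (Fintype.card V ≤ 2 * G.degree v) ↔ (v = x ∨ v = y))
    (hnoheavy : ¬ ∃ (a : V) (c : G.Walk a a), c.IsCycle ∧
      ∀ v : V, Fintype.card V ≤ 2 * G.degree v → v ∈ c.support) :
    G.Adj x y ∧
    ¬ (G.deleteEdges {s(x, y)}).Connected ∧
    Even (Fintype.card V) ∧
    2 * ((G.deleteEdges {s(x, y)}).connectedComponentMk x).supp.ncard = Fintype.card V ∧
    2 * ((G.deleteEdges {s(x, y)}).connectedComponentMk y).supp.ncard = Fintype.card V ∧
    (∀ u : V, u ≠ x → (G.deleteEdges {s(x, y)}).Reachable x u → G.Adj x u) ∧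
    (∀ u : V, u ≠ y → (G.deleteEdges {s(x, y)}).Reachable y u → G.Adj y u) :=
  stmt_5_general G x y hxy hheavy hnoheavy
end

section
/- Let G be a graph on n vertices, let C be a longest cycle of G, and let P be a path (or an o-path) of G with endpoints x and y such that |V(P)| > |V(C)|. Then xy is not an edge of G and d(x) + d(y) < n. -/
/-!
Closing the o-path into an o-cycle, it suffices that an o-cycle on `k` vertices yields a cycle on
at least `k` vertices (Lemma 1). Every non-edge `uv` of an o-cycle has `d(u) + d(v) ≥ n`, and by
Ore's argument adding such an edge creates no longer cycle: a longest cycle through `uv` becomes a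
`u`–`v` path in `G`, and either two chords at its ends cross, or its ends have a common neighbour
off the path, or counting neighbours gives `d(u) + d(v) < n`. Adding the non-edges of the o-cycle
one at a time therefore turns it into a cycle of `G` without shortening the longest cycle.
-/

open Finset SimpleGraph

section

variable {V : Type*}

def IsPathSeq (r : V → V → Prop) (w : ℕ → V) (m : ℕ) : Prop :=
  (∀ i j, i < m → j < m → w i = w j → i = j) ∧ ∀ i, i + 1 < m → r (w i) (w (i + 1))

/-- The closing pair `(w (m - 1), w 0)` is kept apart so that no index is taken modulo `m`. -/
def IsCycleSeq (r : V → V → Prop) (w : ℕ → V) (m : ℕ) : Prop :=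
  3 ≤ m ∧ IsPathSeq r w m ∧ r (w (m - 1)) (w 0)

namespace IsCycleSeq

variable {r s : V → V → Prop} {w : ℕ → V} {m : ℕ}

theorem mono (h : IsCycleSeq r w m) (hrs : ∀ a b, r a b → s a b) : IsCycleSeq s w m :=
  ⟨h.1, ⟨h.2.1.1, fun i hi => hrs _ _ (h.2.1.2 i hi)⟩, hrs _ _ h.2.2⟩

theorem exists_rotate (h : IsCycleSeq r w m) {t : ℕ} (ht : t + 1 < m) :
    ∃ w', IsCycleSeq r w' m ∧ w' (m - 1) = w t ∧ w' 0 = w (t + 1) := by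
  obtain ⟨hm, ⟨hinj, hpath⟩, hclose⟩ := h
  refine ⟨fun j => if j + t + 1 < m then w (j + t + 1) else w (j + t + 1 - m),
    ⟨hm, ⟨?_, ?_⟩, ?_⟩, ?_, ?_⟩
  · intro i j hi hj hij
    dsimp only at hij
    split_ifs at hij with h₁ h₂ h₂ <;> have := hinj _ _ (by omega) (by omega) hij <;> omega
  · intro j hj
    dsimp only
    by_cases h₁ : j + 1 + t + 1 < m
    · rw [if_pos (by omega), if_pos h₁, show j + 1 + t + 1 = j + t + 1 + 1 by omega]
      exact hpath _ (by omega)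
    by_cases h₂ : j + t + 1 < m
    · rw [if_pos h₂, if_neg h₁, show j + t + 1 = m - 1 by omega,
        show j + 1 + t + 1 - m = 0 by omega]
      exact hclose
    · rw [if_neg h₂, if_neg h₁, show j + 1 + t + 1 - m = j + t + 1 - m + 1 by omega]
      exact hpath _ (by omega)
  · dsimp only
    rw [if_neg (by omega), if_pos (by omega), show m - 1 + t + 1 - m = t by omega,
      show 0 + t + 1 = t + 1 by omega]
    exact hpath t ht
  · dsimp only
    rw [if_neg (by omega), show m - 1 + t + 1 - m = t by omega]
  · dsimp only
    rw [if_pos (by omega), zero_add]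

theorem exists_pair_of_not (h : IsCycleSeq r w m) (hs : ¬ IsCycleSeq s w m) :
    ∃ i j, i < m ∧ j < m ∧ i ≠ j ∧ r (w i) (w j) ∧ ¬ s (w i) (w j) := by
  obtain ⟨hm, ⟨hinj, hpath⟩, hclose⟩ := h
  by_contra hne
  push Not at hne
  exact hs ⟨hm, ⟨hinj, fun i hi => hne i (i + 1) (by omega) hi (by omega) (hpath i hi)⟩,
    hne _ _ (by omega) (by omega) (by omega) hclose⟩

end IsCycleSeq

namespace SimpleGraph

theorem exists_walk_support_eq_map_range (G : SimpleGraph V) (w : ℕ → V) :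
    ∀ m, (∀ i, i < m → G.Adj (w i) (w (i + 1))) →
      ∃ p : G.Walk (w 0) (w m), p.support = (List.range (m + 1)).map w ∧
        ∀ e ∈ p.edges, ∃ i, i < m ∧ e = s(w i, w (i + 1))
  | 0, _ => ⟨Walk.nil, by simp, by simp⟩
  | m + 1, hadj => by
    obtain ⟨p, hsupp, hedges⟩ :=
      exists_walk_support_eq_map_range G w m fun i hi => hadj i (by omega)
    refine ⟨p.concat (hadj m (by omega)), ?_, ?_⟩
    · rw [Walk.support_concat, hsupp, List.range_succ (n := m + 1), List.map_append]
      rfl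
    · intro e he
      rw [Walk.edges_concat, List.concat_eq_append, List.mem_append] at he
      rcases he with he | he
      · obtain ⟨i, hi, rfl⟩ := hedges e he
        exact ⟨i, by omega, rfl⟩
      · exact ⟨m, by omega, List.mem_singleton.mp he⟩

end SimpleGraph

theorem IsCycleSeq.exists_isCycle {G : SimpleGraph V} {w : ℕ → V} {m : ℕ}
    (h : IsCycleSeq G.Adj w m) :
    ∃ (b : V) (c : G.Walk b b), c.IsCycle ∧ c.length = m := by
  obtain ⟨hm, ⟨hinj, hpath⟩, hclose⟩ := h
  obtain ⟨p, hsupp, hedges⟩ :=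
    G.exists_walk_support_eq_map_range w (m - 1) fun i hi => hpath i (by omega)
  refine ⟨_, Walk.cons hclose p, (Walk.cons_isCycle_iff p hclose).mpr ⟨?_, ?_⟩, ?_⟩
  · rw [Walk.isPath_def, hsupp, List.nodup_map_iff_inj_on List.nodup_range]
    intro i hi j hj
    exact hinj i j (by rw [List.mem_range] at hi; omega)
      (by rw [List.mem_range] at hj; omega)
  · intro he
    obtain ⟨i, hi, hie⟩ := hedges _ he
    rcases Sym2.eq_iff.mp hie with ⟨h₁, -⟩ | ⟨h₁, h₂⟩
    · have := hinj _ _ (by omega) (by omega) h₁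
      omega
    · have := hinj _ _ (by omega) (by omega) h₁
      have := hinj _ _ (by omega) (by omega) h₂
      omega
  · have := p.length_support
    rw [hsupp, List.length_map, List.length_range] at this
    rw [Walk.length_cons]
    omega

namespace SimpleGraph

variable [Fintype V] (G : SimpleGraph V) [DecidableRel G.Adj]

/-- On the path, the neighbours of `w 0` shifted one step back avoid those of `w (m - 1)`;
off the path, the two neighbourhoods are disjoint. -/
theorem degree_add_degree_lt_card [DecidableEq V] {w : ℕ → V} {m : ℕ} (hm : 0 < m)
    (hinj : ∀ i j, i < m → j < m → w i = w j → i = j)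
    (hcross : ∀ i, i + 1 < m → ¬ (G.Adj (w 0) (w (i + 1)) ∧ G.Adj (w (m - 1)) (w i)))
    (hout : ∀ z, (∀ j, j < m → w j ≠ z) → ¬ (G.Adj (w 0) z ∧ G.Adj (w (m - 1)) z)) :
    G.degree (w 0) + G.degree (w (m - 1)) < Fintype.card V := by
  set P := (range m).image w
  set S := (range (m - 1)).filter fun i => G.Adj (w 0) (w (i + 1))
  set T := (range (m - 1)).filter fun i => G.Adj (w (m - 1)) (w i)
  have hP : #P = m := by
    rw [card_image_of_injOn fun i hi j hj => hinj i j (by simpa using hi) (by simpa using hj),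
      card_range]
  have hS : #(G.neighborFinset (w 0) ∩ P) ≤ #S := by
    refine (card_le_card fun v hv => ?_).trans (card_image_le (f := fun i => w (i + 1)))
    simp only [mem_inter, mem_neighborFinset, P, mem_image, mem_range] at hv
    obtain ⟨hadj, j, hj, rfl⟩ := hv
    have hj0 : j ≠ 0 := by rintro rfl; exact G.irrefl hadj
    refine mem_image.mpr ⟨j - 1, ?_, by simp only [Nat.sub_add_cancel (Nat.pos_of_ne_zero hj0)]⟩
    simpa [S, Nat.sub_add_cancel (Nat.pos_of_ne_zero hj0)] using ⟨by omega, hadj⟩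
  have hT : #(G.neighborFinset (w (m - 1)) ∩ P) ≤ #T := by
    refine (card_le_card fun v hv => ?_).trans (card_image_le (f := w))
    simp only [mem_inter, mem_neighborFinset, P, mem_image, mem_range] at hv
    obtain ⟨hadj, j, hj, rfl⟩ := hv
    have hjm : j ≠ m - 1 := by rintro rfl; exact G.irrefl hadj
    exact mem_image.mpr ⟨j, by simpa [T] using ⟨by omega, hadj⟩, rfl⟩
  have hST : #S + #T ≤ m - 1 := by
    have hdisj : Disjoint S T := Finset.disjoint_left.mpr fun i hiS hiT => by
      simp only [S, T, mem_filter, mem_range] at hiS hiT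
      exact hcross i (by omega) ⟨hiS.2, hiT.2⟩
    rw [← card_union_of_disjoint hdisj, ← card_range (m - 1)]
    exact card_le_card (union_subset (filter_subset _ _) (filter_subset _ _))
  have hoff : #(G.neighborFinset (w 0) \ P) + #(G.neighborFinset (w (m - 1)) \ P) ≤
      Fintype.card V - m := by
    have hdisj : Disjoint (G.neighborFinset (w 0) \ P) (G.neighborFinset (w (m - 1)) \ P) :=
      Finset.disjoint_left.mpr fun z hx hy => by
        simp only [mem_sdiff, mem_neighborFinset, P, mem_image, mem_range, not_exists,
          not_and] at hx hy
        exact hout z (fun j hj => hx.2 j hj) ⟨hx.1, hy.1⟩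
    rw [← card_union_of_disjoint hdisj, ← hP, ← card_compl]
    exact card_le_card (union_subset (fun z hz => mem_compl.mpr (mem_sdiff.mp hz).2)
      (fun z hz => mem_compl.mpr (mem_sdiff.mp hz).2))
  have hdeg (v : V) : G.degree v = #(G.neighborFinset v ∩ P) + #(G.neighborFinset v \ P) := by
    rw [card_inter_add_card_sdiff, card_neighborFinset_eq_degree]
  have hPV : m ≤ Fintype.card V := hP ▸ card_le_univ P
  rw [hdeg, hdeg]
  omega

/-- The relation underlying the o-paths and o-cycles of the paper. -/
def OreAdj (a b : V) : Prop :=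
  G.Adj a b ∨ Fintype.card V ≤ G.degree a + G.degree b

variable {G}

theorem OreAdj.mono {H : SimpleGraph V} [DecidableRel H.Adj] (hle : G ≤ H) {a b : V}
    (h : G.OreAdj a b) : H.OreAdj a b :=
  h.imp (fun hab => hle hab) fun hd =>
    hd.trans (add_le_add (degree_le_of_le hle) (degree_le_of_le hle))

end SimpleGraph

namespace IsPathSeq

variable {G : SimpleGraph V} {w : ℕ → V} {m : ℕ}

/-- The cycle `w 0, …, w i, w (m - 1), …, w (i + 1)`. -/
theorem isCycleSeq_of_crossing (h : IsPathSeq G.Adj w m) (hm : 3 ≤ m) {i : ℕ} (hi : i + 1 < m)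
    (hx : G.Adj (w 0) (w (i + 1))) (hy : G.Adj (w (m - 1)) (w i)) :
    IsCycleSeq G.Adj (fun j => if j ≤ i then w j else w (m + i - j)) m := by
  obtain ⟨hinj, hpath⟩ := h
  refine ⟨hm, ⟨?_, ?_⟩, ?_⟩
  · intro a b ha hb hab
    dsimp only at hab
    split_ifs at hab <;> have := hinj _ _ (by omega) (by omega) hab <;> omega
  · intro j hj
    dsimp only
    rcases lt_trichotomy j i with hji | rfl | hji
    · rw [if_pos hji.le, if_pos (by omega : j + 1 ≤ i)]
      exact hpath j (by omega)
    · rw [if_pos le_rfl, if_neg (by omega), show m + j - (j + 1) = m - 1 by omega]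
      exact hy.symm
    · rw [if_neg (by omega), if_neg (by omega), show m + i - j = m + i - (j + 1) + 1 by omega]
      exact (hpath _ (by omega)).symm
  · dsimp only
    rw [if_neg (by omega), if_pos (Nat.zero_le i), show m + i - (m - 1) = i + 1 by omega]
    exact hx.symm

theorem isCycleSeq_of_common_neighbor (h : IsPathSeq G.Adj w m) (hm : 2 ≤ m) {z : V}
    (hz : ∀ j, j < m → w j ≠ z) (hx : G.Adj (w 0) z) (hy : G.Adj (w (m - 1)) z) :
    IsCycleSeq G.Adj (fun j => if j = m then z else w j) (m + 1) := by
  obtain ⟨hinj, hpath⟩ := h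
  refine ⟨by omega, ⟨?_, ?_⟩, ?_⟩
  · intro a b ha hb hab
    dsimp only at hab
    split_ifs at hab with h₁ h₂ h₂
    · omega
    · exact absurd hab.symm (hz b (by omega))
    · exact absurd hab (hz a (by omega))
    · exact hinj a b (by omega) (by omega) hab
  · intro j hj
    dsimp only
    rw [if_neg (by omega)]
    by_cases hjm : j + 1 = m
    · rw [if_pos hjm, show j = m - 1 by omega]
      exact hy
    · rw [if_neg hjm]
      exact hpath j (by omega)
  · dsimp only
    rw [if_pos (by omega), if_neg (by omega)]
    exact hx.symm

/-- Ore's argument: a crossing pair of chords closes the path into a cycle, a common neighbour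
off the path extends it to a longer cycle, and otherwise the degrees are too small. -/
theorem exists_isCycleSeq_of_card_le_degree_add_degree [Fintype V] [DecidableEq V]
    [DecidableRel G.Adj] (h : IsPathSeq G.Adj w m) (hm : 3 ≤ m)
    (hdeg : Fintype.card V ≤ G.degree (w 0) + G.degree (w (m - 1))) :
    ∃ m', m ≤ m' ∧ ∃ w', IsCycleSeq G.Adj w' m' := by
  by_cases hcross : ∃ i, i + 1 < m ∧ G.Adj (w 0) (w (i + 1)) ∧ G.Adj (w (m - 1)) (w i)
  · obtain ⟨i, hi, hx, hy⟩ := hcross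
    exact ⟨m, le_rfl, _, h.isCycleSeq_of_crossing hm hi hx hy⟩
  by_cases hout : ∃ z, (∀ j, j < m → w j ≠ z) ∧ G.Adj (w 0) z ∧ G.Adj (w (m - 1)) z
  · obtain ⟨z, hz, hx, hy⟩ := hout
    exact ⟨m + 1, by omega, _, h.isCycleSeq_of_common_neighbor (by omega) hz hx hy⟩
  exact absurd hdeg <| not_le.mpr <| G.degree_add_degree_lt_card (by omega) h.1
    (fun i hi hc => hcross ⟨i, hi, hc⟩) (fun z hz hc => hout ⟨z, hz, hc⟩)

end IsPathSeq

namespace SimpleGraph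

theorem eq_of_sup_edge_adj {G : SimpleGraph V} {u v a b : V}
    (h : (G ⊔ edge u v).Adj a b) (hn : ¬ G.Adj a b) :
    s(a, b) = s(u, v) :=
  ((adj_edge _ _).mp (((sup_adj _ _ _ _).mp h).resolve_left hn)).1.symm

variable [Fintype V] [DecidableEq V] {G : SimpleGraph V} [DecidableRel G.Adj] {u v : V}
  {w : ℕ → V} {m : ℕ}

theorem exists_isCycleSeq_of_sup_edge_of_not_adj
    (huv : Fintype.card V ≤ G.degree u + G.degree v) (h : IsCycleSeq (G ⊔ edge u v).Adj w m)
    (hn : ¬ G.Adj (w (m - 1)) (w 0)) :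
    ∃ m', m ≤ m' ∧ ∃ w', IsCycleSeq G.Adj w' m' := by
  obtain ⟨hm, ⟨hinj, hpath⟩, hclose⟩ := h
  have hends := eq_of_sup_edge_adj hclose hn
  have hpathG : IsPathSeq G.Adj w m := by
    refine ⟨hinj, fun i hi => by_contra fun hni => ?_⟩
    rcases Sym2.eq_iff.mp ((eq_of_sup_edge_adj (hpath i hi) hni).trans hends.symm) with
      ⟨h₁, h₂⟩ | ⟨h₁, h₂⟩
    · have := hinj _ _ (by omega) (by omega) h₁
      omega
    · have := hinj _ _ (by omega) (by omega) h₁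
      have := hinj _ _ (by omega) (by omega) h₂
      omega
  refine hpathG.exists_isCycleSeq_of_card_le_degree_add_degree hm ?_
  rcases Sym2.eq_iff.mp hends with ⟨h₁, h₂⟩ | ⟨h₁, h₂⟩ <;> rw [h₁, h₂] <;> omega

theorem exists_isCycleSeq_of_sup_edge (huv : Fintype.card V ≤ G.degree u + G.degree v)
    (h : IsCycleSeq (G ⊔ edge u v).Adj w m) :
    ∃ m', m ≤ m' ∧ ∃ w', IsCycleSeq G.Adj w' m' := by
  by_cases hclose : G.Adj (w (m - 1)) (w 0)
  · by_cases hpath : ∀ i, i + 1 < m → G.Adj (w i) (w (i + 1))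
    · exact ⟨m, le_rfl, w, h.1, ⟨h.2.1.1, hpath⟩, hclose⟩
    push Not at hpath
    obtain ⟨t, ht, hnt⟩ := hpath
    obtain ⟨w', hw', hlast, hfirst⟩ := h.exists_rotate ht
    exact exists_isCycleSeq_of_sup_edge_of_not_adj huv hw' (by rwa [hlast, hfirst])
  · exact exists_isCycleSeq_of_sup_edge_of_not_adj huv h hclose

/-- Lemma 1 of the paper, by closing the non-edges of the o-cycle one at a time. -/
theorem exists_isCycleSeq_of_oreAdj (h : IsCycleSeq G.OreAdj w m) :
    ∃ m', m ≤ m' ∧ ∃ w', IsCycleSeq G.Adj w' m' := by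
  suffices ∀ (H : SimpleGraph V) [DecidableRel H.Adj], IsCycleSeq H.OreAdj w m →
      ∃ m', m ≤ m' ∧ ∃ w', IsCycleSeq H.Adj w' m' from this G h
  intro G
  induction G using WellFoundedGT.induction with
  | _ G ih =>
  intro _ h
  by_cases hG : IsCycleSeq G.Adj w m
  · exact ⟨m, le_rfl, w, hG⟩
  obtain ⟨i, j, hi, hj, hij, hore, hn⟩ := h.exists_pair_of_not hG
  have hne : w i ≠ w j := fun he => hij (h.2.1.1 i j hi hj he)
  have hlt : G < G ⊔ edge (w i) (w j) := lt_sup_edge _ _ _ hne hn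
  obtain ⟨m', hm', w', hw'⟩ := ih _ hlt (h.mono fun a b hab => hab.mono hlt.le)
  obtain ⟨m'', hm'', w'', hw''⟩ := exists_isCycleSeq_of_sup_edge (hore.resolve_left hn) hw'
  exact ⟨m'', hm'.trans hm'', w'', hw''⟩

end SimpleGraph

end

theorem stmt_9_general {V : Type*} [Fintype V] [DecidableEq V] (G : SimpleGraph V)
    [DecidableRel G.Adj] (a : V) (C : G.Walk a a) (hC : C.IsCycle)
    (hlong : ∀ (b : V) (C' : G.Walk b b), C'.IsCycle → C'.length ≤ C.length)
    (k : ℕ) (w : ℕ → V)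
    (hinj : ∀ i j, i < k → j < k → w i = w j → i = j)
    (hop : ∀ i, i + 1 < k → G.Adj (w i) (w (i + 1)) ∨
      Fintype.card V ≤ G.degree (w i) + G.degree (w (i + 1)))
    (hlen : C.length < k) :
    ¬ G.Adj (w 0) (w (k - 1)) ∧
      G.degree (w 0) + G.degree (w (k - 1)) < Fintype.card V := by
  have hk : 3 ≤ k := hC.three_le_length.trans hlen.le
  by_contra hcon
  have hclose : G.OreAdj (w (k - 1)) (w 0) := by
    rw [not_and_or, not_not, not_lt] at hcon
    exact hcon.imp (fun h => h.symm) fun h => by omega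
  obtain ⟨m, hkm, w', hw'⟩ := exists_isCycleSeq_of_oreAdj ⟨hk, ⟨hinj, hop⟩, hclose⟩
  obtain ⟨b, c, hc, hcm⟩ := hw'.exists_isCycle
  have := hlong b c hc
  omega

theorem stmt_9 {V : Type*} [Fintype V] [DecidableEq V] (G : SimpleGraph V)
    [DecidableRel G.Adj] (a : V) (C : G.Walk a a) (hC : C.IsCycle)
    (hlong : ∀ (b : V) (C' : G.Walk b b), C'.IsCycle → C'.length ≤ C.length)
    (k : ℕ) (hk : 2 ≤ k) (w : ℕ → V)
    (hinj : ∀ i j, i < k → j < k → w i = w j → i = j)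
    (hop : ∀ i, i + 1 < k → G.Adj (w i) (w (i + 1)) ∨
      Fintype.card V ≤ G.degree (w i) + G.degree (w (i + 1)))
    (hlen : C.length < k) :
    ¬ G.Adj (w 0) (w (k - 1)) ∧
      G.degree (w 0) + G.degree (w (k - 1)) < Fintype.card V :=
  stmt_9_general G a C hC hlong k w hinj hop hlen
end

section
/- There exists a finite simple 2-connected graph G with no induced K_{1,5}, such that some longest cycle of G omits a vertex of degree at least |V(G)|/2. -/
/-!
The graph is the example of the paper with `r = 8` and `k = 6`: an 18-cycle `Z` on `0, …, 17`
with antipodal vertices `0` and `9`, hubs `x = 18 ~ 0` and `y = 19 ~ 9`, and three 6-cliques on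
`20–25`, `26–31`, `32–37` joined completely to both hubs. The hub `x` has degree `19 = n / 2`
and misses `Z`.

No cycle is longer than `Z`. Removing the hubs leaves `Z` and the cliques as components, so a
cycle avoiding both hubs has at most 18 vertices. Otherwise the hubs cut the cycle into one or
two segments, each inside a single component and running between neighbours of hubs. A segment
in a clique has at most 6 vertices; a segment in `Z` must join the two Z-neighbours `0` and `9`
of different hubs, since each hub has only one neighbour on `Z`, so it is one of the two arcs and
has 10 vertices; and at most one segment lies in `Z`. This gives at most `2 + 10 + 6 = 18`.

Every neighbourhood is covered by at most four cliques, which excludes an induced `K_{1,5}`, and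
the graph is 2-connected because it has an st-numbering.
-/

open SimpleGraph Finset

namespace SimpleGraph

variable {V : Type*} {G : SimpleGraph V}

theorem not_exists_induced_star_of_cover {k m : ℕ} (hkm : k < m) (cover : V → V → Fin k)
    (hcover : ∀ c a b, G.Adj c a → G.Adj c b → a ≠ b → cover c a = cover c b → G.Adj a b) :
    ¬ ∃ (c : V) (l : Fin m → V), Function.Injective l ∧
      (∀ i, G.Adj c (l i)) ∧ ∀ i j, i ≠ j → ¬ G.Adj (l i) (l j) := by
  rintro ⟨c, l, hl, hadj, hind⟩
  obtain ⟨i, j, hij, hcov⟩ := Fintype.exists_ne_map_eq_of_card_lt (cover c ∘ l) (by simpa)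
  exact hind i j hij (hcover c _ _ (hadj i) (hadj j) (hl.ne hij) hcov)

lemma induce_reachable_of_descent {s : Set V} {r : V} (f : V → ℕ)
    (hdesc : ∀ w ∈ s, w ≠ r → ∃ u ∈ s, G.Adj w u ∧ f u < f w) {w : V} (hw : w ∈ s) :
    ∃ hr : r ∈ s, (G.induce s).Reachable ⟨w, hw⟩ ⟨r, hr⟩ := by
  induction hn : f w using Nat.strong_induction_on generalizing w with
  | _ n ih =>
    by_cases hwr : w = r
    · subst hwr
      exact ⟨hw, .rfl⟩
    obtain ⟨u, hu, hwu, hlt⟩ := hdesc w hw hwr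
    obtain ⟨hr, hreach⟩ := ih _ (hn ▸ hlt) hu rfl
    exact ⟨hr, (Adj.reachable (G := G.induce s) (u := ⟨w, hw⟩) (v := ⟨u, hu⟩) hwu).trans hreach⟩

/-- Unlike the classical notion, `f` need not be injective. -/
structure IsSTNumbering (G : SimpleGraph V) (s t : V) (f : V → ℕ) : Prop where
  adj : G.Adj s t
  exists_adj_lt : ∀ w, w ≠ s → ∃ u, G.Adj w u ∧ f u < f w
  exists_adj_gt : ∀ w, w ≠ t → ∃ u, G.Adj w u ∧ f w < f u

theorem IsSTNumbering.connected_induce_ne [Finite V] {s t : V} {f : V → ℕ}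
    (hf : G.IsSTNumbering s t f) (v : V) : (G.induce {u | u ≠ v}).Connected := by
  obtain ⟨M, hM⟩ := (Set.finite_range f).bddAbove
  have hle : ∀ w, f w ≤ M := fun w => hM ⟨w, rfl⟩
  let S := {u | u ≠ v}
  let lower := {u | u ≠ v ∧ f u ≤ f v}
  let upper := {u | u ≠ v ∧ f v ≤ f u}
  -- descend to `s` below `v` and ascend to `t` above it, the order reversed by `M - f`
  have down : ∀ w (hw : w ∈ lower), ∃ hs : s ∈ S, (G.induce S).Reachable ⟨w, hw.1⟩ ⟨s, hs⟩ := by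
    intro w hw
    obtain ⟨hs, hreach⟩ := induce_reachable_of_descent (s := lower) f (fun w ⟨_, hwv⟩ hws => by
      obtain ⟨u, hwu, hlt⟩ := hf.exists_adj_lt w hws
      exact ⟨u, ⟨fun h => by subst h; omega, by omega⟩, hwu, hlt⟩) hw
    exact ⟨hs.1, hreach.map (induceHomOfLE G fun u hu => hu.1).toHom⟩
  have up : ∀ w (hw : w ∈ upper), ∃ ht : t ∈ S, (G.induce S).Reachable ⟨w, hw.1⟩ ⟨t, ht⟩ := by
    intro w hw
    obtain ⟨ht, hreach⟩ := induce_reachable_of_descent (s := upper) (fun u => M - f u)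
      (fun w ⟨_, hwv⟩ hwt => by
        obtain ⟨u, hwu, hlt⟩ := hf.exists_adj_gt w hwt
        have := hle u
        exact ⟨u, ⟨fun h => by subst h; omega, by omega⟩, hwu, by omega⟩) hw
    exact ⟨ht.1, hreach.map (induceHomOfLE G fun u hu => hu.1).toHom⟩
  have reach : ∀ w (hw : w ∈ S), (∃ hs : s ∈ S, (G.induce S).Reachable ⟨w, hw⟩ ⟨s, hs⟩) ∨
      ∃ ht : t ∈ S, (G.induce S).Reachable ⟨w, hw⟩ ⟨t, ht⟩ := by
    intro w hw
    rcases le_total (f w) (f v) with h | h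
    · exact .inl (down w ⟨hw, h⟩)
    · exact .inr (up w ⟨hw, h⟩)
  by_cases hvs : v = s
  · subst hvs
    have ht : t ∈ S := hf.adj.ne.symm
    refine (connected_iff_exists_forall_reachable _).2 ⟨⟨t, ht⟩, fun ⟨w, hw⟩ => ?_⟩
    rcases reach w hw with ⟨hs, -⟩ | ⟨_, hreach⟩
    · exact absurd rfl hs
    · exact hreach.symm
  · have hs : s ∈ S := Ne.symm hvs
    refine (connected_iff_exists_forall_reachable _).2 ⟨⟨s, hs⟩, fun ⟨w, hw⟩ => ?_⟩
    rcases reach w hw with ⟨_, hreach⟩ | ⟨ht, hreach⟩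
    · exact hreach.symm
    · exact ((Adj.reachable (G := G.induce S) (u := ⟨s, hs⟩) (v := ⟨t, ht⟩) hf.adj).trans
        hreach.symm)

end SimpleGraph

namespace SimpleGraph.Walk

variable {V : Type*} {G : SimpleGraph V} {u v : V}

lemma apply_eq_of_mem_support {α : Type*} {S : Set V} {f : V → α}
    (hf : ∀ a b, G.Adj a b → a ∈ S → b ∈ S → f a = f b) (p : G.Walk u v)
    (hp : ∀ z ∈ p.support, z ∈ S) : ∀ z ∈ p.support, f z = f u := by
  induction p with
  | nil => simp
  | @cons a b _ hab q ih =>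
    have hq : ∀ z ∈ q.support, z ∈ S := fun z hz => hp z (by simp [hz])
    have hfab : f a = f b := hf a b hab (hp a (by simp)) (hq b q.start_mem_support)
    simp only [support_cons, List.mem_cons, forall_eq_or_imp, true_and]
    exact fun z hz => (ih hq z hz).trans hfab.symm

lemma IsPath.length_lt_card {p : G.Walk u v} (hp : p.IsPath) {T : Finset V}
    (hT : ∀ z ∈ p.support, z ∈ T) : p.length < T.card := by
  have := Multiset.card_le_card
    ((Multiset.le_iff_subset (Multiset.coe_nodup.2 hp.support_nodup)).2 hT)
  simp_all [length_support]

lemma IsCycle.length_le_card {c : G.Walk u u} (hc : c.IsCycle) {T : Finset V}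
    (hT : ∀ z ∈ c.support, z ∈ T) : c.length ≤ T.card := by
  have := Multiset.card_le_card
    ((Multiset.le_iff_subset (Multiset.coe_nodup.2 hc.support_nodup)).2
      fun z hz => hT z (List.mem_of_mem_tail hz))
  simpa [length_support] using this

theorem IsPath.natCast_length_eq {R : Type*} [CommRing R] {Z : Set V} {pos : V → R}
    (hstep : ∀ a ∈ Z, ∀ b ∈ Z, G.Adj a b → pos b = pos a + 1 ∨ pos b = pos a - 1)
    (hinj : Set.InjOn pos Z) {p : G.Walk u v} (hp : p.IsPath) (hZ : ∀ z ∈ p.support, z ∈ Z) :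
    (p.length : R) = pos v - pos u ∨ (p.length : R) = pos u - pos v := by
  have hmem : ∀ i, p.getVert i ∈ Z := fun i => hZ _ (p.getVert_mem_support i)
  have step : ∀ i < p.length, pos (p.getVert (i + 1)) = pos (p.getVert i) + 1 ∨
      pos (p.getVert (i + 1)) = pos (p.getVert i) - 1 := fun i hi =>
    hstep _ (hmem i) _ (hmem (i + 1)) (p.adj_getVert_succ hi)
  rcases Nat.eq_zero_or_pos p.length with h0 | hpos
  · cases eq_of_length_eq_zero h0
    simp [h0]
  obtain ⟨σ, hσ, h1⟩ : ∃ σ : R, (σ = 1 ∨ σ = -1) ∧ pos (p.getVert 1) = pos u + σ := by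
    rcases step 0 hpos with h | h <;> rw [getVert_zero] at h
    exacts [⟨1, .inl rfl, h⟩, ⟨-1, .inr rfl, by rw [h, sub_eq_add_neg]⟩]
  -- a path never steps back, so it keeps moving in direction `σ`
  have walk : ∀ i, i + 1 ≤ p.length → pos (p.getVert i) = pos u + i * σ ∧
      pos (p.getVert (i + 1)) = pos u + ((i + 1 : ℕ) : R) * σ := by
    intro i
    induction i with
    | zero => intro; simp [h1]
    | succ i ih =>
      intro hi
      obtain ⟨hi0, hi1⟩ := ih (by omega)
      refine ⟨hi1, ?_⟩
      have hback : pos (p.getVert (i + 1 + 1)) ≠ pos (p.getVert i) := fun h => by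
        have := hp.getVert_injOn (by simp; omega) (by simp; omega) (hinj (hmem _) (hmem _) h)
        omega
      rcases step (i + 1) hi with h | h <;> rcases hσ with rfl | rfl <;>
        first
        | (rw [h, hi1]; push_cast; ring1)
        | (exfalso; apply hback; rw [h, hi1, hi0]; push_cast; ring)
  have hend := (walk (p.length - 1) (by omega)).2
  rw [Nat.sub_add_cancel hpos, getVert_length] at hend
  rcases hσ with rfl | rfl
  · left; rw [hend]; ring
  · right; rw [hend]; ring
lemma IsPath.end_notMem_support_dropLast {p : G.Walk u v} (hp : p.IsPath) (huv : u ≠ v) :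
    v ∉ p.dropLast.support := by
  have := hp.support_nodup
  rw [← dropLast_support_concat, List.nodup_append] at this
  rw [support_dropLast (not_nil_of_ne huv)]
  exact fun h => this.2.2 v h v (by simp) rfl

lemma IsPath.start_notMem_support_tail {p : G.Walk u v} (hp : p.IsPath) (huv : u ≠ v) :
    u ∉ p.tail.support := by
  have := hp.support_nodup
  rw [← cons_support_tail (not_nil_of_ne huv), List.nodup_cons] at this
  exact this.1

lemma IsPath.exists_split [DecidableEq V] {p : G.Walk u v} (hp : p.IsPath) {w : V}
    (hw : w ∈ p.support) (hu : u ≠ w) (hv : w ≠ v) :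
    ∃ (a b : V) (p₁ : G.Walk u a) (p₂ : G.Walk b v), G.Adj a w ∧ G.Adj w b ∧
      p₁.IsPath ∧ p₂.IsPath ∧ w ∉ p₁.support ∧ w ∉ p₂.support ∧
      p₁.support ⊆ p.support ∧ p₂.support ⊆ p.support ∧
      p.length = p₁.length + p₂.length + 2 := by
  have ht := hp.takeUntil hw
  have hd := hp.dropUntil hw
  have hlen := congrArg length (p.take_spec hw)
  rw [length_append] at hlen
  have ht1 := length_dropLast_add_one (not_nil_of_ne hu : ¬(p.takeUntil w hw).Nil)
  have hd1 := length_tail_add_one (not_nil_of_ne hv : ¬(p.dropUntil w hw).Nil)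
  refine ⟨_, _, (p.takeUntil w hw).dropLast, (p.dropUntil w hw).tail,
    adj_penultimate (not_nil_of_ne hu), adj_snd (not_nil_of_ne hv), ht.dropLast, hd.tail,
    ht.end_notMem_support_dropLast hu, hd.start_notMem_support_tail hv,
    fun z hz => p.support_takeUntil_subset_support hw ((isSubwalk_take _ _).support_subset hz),
    fun z hz => p.support_dropUntil_subset_support hw ((isSubwalk_drop _ _).support_subset hz),
    by omega⟩

lemma IsCycle.exists_isPath {c : G.Walk u u} (hc : c.IsCycle) :
    ∃ (a b : V) (r : G.Walk a b), G.Adj u a ∧ G.Adj u b ∧ a ≠ b ∧ r.IsPath ∧ u ∉ r.support ∧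
      c.length = r.length + 2 := by
  have h3 := hc.three_le_length
  have hnil : ¬c.Nil := hc.not_nil
  have hsnd : c.snd ≠ u := (c.adj_snd hnil).ne.symm
  have hnil' : ¬c.tail.Nil := not_nil_of_ne hsnd
  have hr := hc.isPath_tail.dropLast
  have hlen := length_tail_add_one hnil
  have hlen' := length_dropLast_add_one hnil'
  refine ⟨_, _, c.tail.dropLast, c.adj_snd hnil, (adj_penultimate hnil').symm, fun hab => ?_, hr,
    hc.isPath_tail.end_notMem_support_dropLast hsnd, by omega⟩
  have h0 : 0 ∈ {i | i ≤ c.tail.dropLast.length} := by simp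
  have hL : c.tail.dropLast.length ∈ {i | i ≤ c.tail.dropLast.length} := by simp
  have := hr.getVert_injOn h0 hL (by rw [getVert_zero, getVert_length]; exact hab)
  omega

end SimpleGraph.Walk

namespace Counterexample

def G : SimpleGraph (Fin 38) := SimpleGraph.fromRel fun a b =>
  (a.val < 18 ∧ b.val = (a.val + 1) % 18) ∨ (a = 18 ∧ (b = 0 ∨ 20 ≤ b.val)) ∨
    (a = 19 ∧ (b = 9 ∨ 20 ≤ b.val)) ∨
    (20 ≤ a.val ∧ 20 ≤ b.val ∧ (a.val - 20) / 6 = (b.val - 20) / 6)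

instance : DecidableRel G.Adj := fun a b => decidable_of_iff' _ (fromRel_adj _ a b)

def hubs : Finset (Fin 38) := {18, 19}

def part (w : Fin 38) : ℕ :=
  if w.val < 18 then 0 else if w.val < 20 then 1 else (w.val - 20) / 6 + 2

def pos (w : Fin 38) : ZMod 18 := w.val

def cover (c a : Fin 38) : Fin 4 :=
  if c.val < 18 then
    if a.val = (c.val + 1) % 18 then 0 else if a.val = (c.val + 17) % 18 then 1 else 2
  else if c.val < 20 then
    if a.val < 18 then 0 else if a.val < 26 then 1 else if a.val < 32 then 2 else 3
  else if a = 18 then 1 else if a = 19 then 2 else 0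

-- the order `20, 18, 0, …, 8, 17, …, 10, 9`, then the other clique vertices, then `19`
def stNumber (w : Fin 38) : ℕ :=
  if w = 20 then 0 else if w = 18 then 1 else if w.val ≤ 8 then w.val + 2
  else if w.val < 18 then if w = 9 then 19 else 28 - w.val else if w = 19 then 21 else 20

theorem isSTNumbering : G.IsSTNumbering 20 19 stNumber := ⟨by decide, by decide, by decide⟩

theorem cover_spec :
    ∀ c a b, G.Adj c a → G.Adj c b → a ≠ b → cover c a = cover c b → G.Adj a b := by
  decide

theorem part_eq_of_adj : ∀ a b, G.Adj a b → a ∈ {z | z ∉ hubs} → b ∈ {z | z ∉ hubs} →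
    part a = part b := by
  decide

theorem card_part_le : ∀ w, #{z | part z = part w} ≤ 18 := by decide

theorem card_part_le_six : ∀ w, part w ≠ 0 → #{z | part z = part w} ≤ 6 := by decide

theorem notMem_hubs_of_adj : ∀ h ∈ hubs, ∀ u, G.Adj h u → u ∉ hubs := by decide

theorem exists_ne_hub : ∀ h ∈ hubs, ∃ h' ∈ hubs, h ≠ h' := by decide

theorem eq_of_adj_hub : ∀ h ∈ hubs, ∀ u u', G.Adj h u → G.Adj h u' → part u = 0 → part u' = 0 →
    u = u' := by
  decide

theorem pos_sub_eq_nine : ∀ h ∈ hubs, ∀ h' ∈ hubs, h ≠ h' → ∀ u u', G.Adj h u → G.Adj h' u' →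
    part u = 0 → part u' = 0 → pos u' - pos u = 9 := by
  decide

theorem pos_adj : ∀ a ∈ {z | part z = 0}, ∀ b ∈ {z | part z = 0}, G.Adj a b →
    pos b = pos a + 1 ∨ pos b = pos a - 1 := by
  decide

theorem pos_injOn : Set.InjOn pos {z | part z = 0} := by
  intro a ha b hb
  revert a b
  decide

theorem two_mul_ncard_neighborSet : 38 ≤ 2 * (G.neighborSet 18).ncard := by
  rw [Set.ncard_eq_toFinset_card']
  decide

def cycleHom : cycleGraph 18 →g G where
  toFun := Fin.castLE (by norm_num)
  map_rel' := by decide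

variable {a b : Fin 38}

lemma part_eq_of_forall_notMem_hubs (p : G.Walk a b) (hp : ∀ z ∈ p.support, z ∉ hubs) :
    ∀ z ∈ p.support, part z = part a :=
  p.apply_eq_of_mem_support part_eq_of_adj hp

lemma length_le_five_of_part_ne_zero {p : G.Walk a b} (hp : p.IsPath)
    (havoid : ∀ z ∈ p.support, z ∉ hubs) {z : Fin 38} (hz : z ∈ p.support) (hz0 : part z ≠ 0) :
    p.length ≤ 5 := by
  have hpart := part_eq_of_forall_notMem_hubs p havoid
  have := hp.length_lt_card (T := {y | part y = part a}) (by simpa using hpart)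
  have := card_part_le_six a (hpart z hz ▸ hz0)
  omega

lemma length_le_nine_of_adj_hubs {h h' : Fin 38} (hh : h ∈ hubs) (hh' : h' ∈ hubs) (hne : h ≠ h')
    {p : G.Walk a b} (hp : p.IsPath) (havoid : ∀ z ∈ p.support, z ∉ hubs) (ha : G.Adj h a)
    (hb : G.Adj h' b) : p.length ≤ 9 := by
  by_cases ha0 : part a = 0
  · have hpart := part_eq_of_forall_notMem_hubs p havoid
    have hZ : ∀ z ∈ p.support, z ∈ {y | part y = 0} := fun z hz => (hpart z hz).trans ha0
    have hlt := hp.length_lt_card (T := {y | part y = part a}) (by simpa using hpart)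
    have := card_part_le a
    have h9 := pos_sub_eq_nine h hh h' hh' hne a b ha hb ha0 (hZ b p.end_mem_support)
    have hcast : ((p.length : ℕ) : ZMod 18) = (9 : ℕ) := by
      rcases hp.natCast_length_eq pos_adj pos_injOn hZ with h | h
      · rw [h, h9]; rfl
      · rw [h, ← neg_sub, h9]; rfl
    rw [ZMod.natCast_eq_natCast_iff'] at hcast
    omega
  · have := length_le_five_of_part_ne_zero hp havoid p.start_mem_support ha0
    omega

lemma length_le_sixteen_of_adj_hub {h h' : Fin 38} (hh : h ∈ hubs) (hh' : h' ∈ hubs) (hne : h ≠ h')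
    {r : G.Walk a b} (hr : r.IsPath) (hrh : h ∉ r.support) (ha : G.Adj h a) (hb : G.Adj h b)
    (hab : a ≠ b) : r.length ≤ 16 := by
  have hhubs : ∀ z ∈ hubs, z = h ∨ z = h' := by
    intro z hz
    simp only [hubs, Finset.mem_insert, Finset.mem_singleton] at hh hh' hz
    omega
  have ha' := notMem_hubs_of_adj h hh a ha
  have hb' := notMem_hubs_of_adj h hh b hb
  have hclique : part a ≠ 0 ∨ part b ≠ 0 := by
    by_contra! h0
    exact hab (eq_of_adj_hub h hh a b ha hb h0.1 h0.2)
  by_cases hm : h' ∈ r.support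
  · obtain ⟨a', b', r₁, r₂, ha₁, hb₂, hr₁, hr₂, hr₁h', hr₂h', hs₁, hs₂, hlen⟩ :=
      hr.exists_split hm (fun e => ha' (e ▸ hh')) (fun e => hb' (e ▸ hh'))
    have avoid₁ : ∀ z ∈ r₁.support, z ∉ hubs := fun z hz hzh =>
      (hhubs z hzh).elim (fun e => hrh (e ▸ hs₁ hz)) (fun e => hr₁h' (e ▸ hz))
    have avoid₂ : ∀ z ∈ r₂.support, z ∉ hubs := fun z hz hzh =>
      (hhubs z hzh).elim (fun e => hrh (e ▸ hs₂ hz)) (fun e => hr₂h' (e ▸ hz))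
    have := length_le_nine_of_adj_hubs hh hh' hne hr₁ avoid₁ ha ha₁.symm
    have := length_le_nine_of_adj_hubs hh' hh hne.symm hr₂ avoid₂ hb₂ hb
    rcases hclique with h0 | h0
    · have := length_le_five_of_part_ne_zero hr₁ avoid₁ r₁.start_mem_support h0
      omega
    · have := length_le_five_of_part_ne_zero hr₂ avoid₂ r₂.end_mem_support h0
      omega
  · have avoid : ∀ z ∈ r.support, z ∉ hubs := fun z hz hzh =>
      (hhubs z hzh).elim (fun e => hrh (e ▸ hz)) (fun e => hm (e ▸ hz))
    rcases hclique with h0 | h0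
    · have := length_le_five_of_part_ne_zero hr avoid r.start_mem_support h0
      omega
    · have := length_le_five_of_part_ne_zero hr avoid r.end_mem_support h0
      omega

lemma length_le_of_isCycle_of_mem_hubs {h h' : Fin 38} (hh : h ∈ hubs) (hh' : h' ∈ hubs)
    (hne : h ≠ h') {c : G.Walk h h} (hc : c.IsCycle) : c.length ≤ 18 := by
  obtain ⟨a, b, r, ha, hb, hab, hr, hrh, hlen⟩ := hc.exists_isPath
  have := length_le_sixteen_of_adj_hub hh hh' hne hr hrh ha hb hab
  omega

theorem length_le_of_isCycle {u : Fin 38} {c : G.Walk u u} (hc : c.IsCycle) : c.length ≤ 18 := by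
  by_cases hhub : ∃ h ∈ hubs, h ∈ c.support
  · obtain ⟨h, hh, hmem⟩ := hhub
    obtain ⟨h', hh', hne⟩ := exists_ne_hub h hh
    simpa using length_le_of_isCycle_of_mem_hubs hh hh' hne (hc.rotate hmem)
  · simp only [not_exists, not_and] at hhub
    have hpart := c.apply_eq_of_mem_support part_eq_of_adj fun z hz hzh => hhub z hzh hz
    exact (hc.length_le_card (T := {y | part y = part u}) (by simpa using hpart)).trans
      (card_part_le u)

end Counterexample

theorem stmt_14 :
    ∃ (n : ℕ) (G : SimpleGraph (Fin n)),
      (¬ ∃ (c : Fin n) (l : Fin 5 → Fin n), Function.Injective l ∧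
        (∀ i, G.Adj c (l i)) ∧ (∀ i j, i ≠ j → ¬ G.Adj (l i) (l j))) ∧
      (3 ≤ n ∧ ∀ v : Fin n, (G.induce {u | u ≠ v}).Connected) ∧
      ∃ (a : Fin n) (c : G.Walk a a), c.IsCycle ∧
        (∀ (b : Fin n) (c' : G.Walk b b), c'.IsCycle → c'.length ≤ c.length) ∧
        ∃ v : Fin n, n ≤ 2 * (G.neighborSet v).ncard ∧ v ∉ c.support := by
  open Counterexample in
  refine ⟨38, G, not_exists_induced_star_of_cover (by norm_num) cover cover_spec,
    ⟨by norm_num, isSTNumbering.connected_induce_ne⟩, _, (cycleGraph.cycle 15).map cycleHom,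
    cycleGraph.isCycle_cycle.map (Fin.castLE_injective (by norm_num)), fun _ _ hc => ?_, 18,
    two_mul_ncard_neighborSet, ?_⟩
  · simpa using length_le_of_isCycle hc
  · simp only [Walk.support_map, List.mem_map, not_exists, not_and, Fin.ext_iff]
    exact fun x _ => by simp [cycleHom]; omega
end

section
/- Let S be a connected graph on at least 3 vertices such that S is not isomorphic to P_3, K_{1,3}, or K_{1,4}. Then S contains K_3, P_4, C_4, or K_{1,5} as an induced subgraph. -/
/-! Suppose `S` has no induced `K₃`, `P₄` or `C₄`, and let `v` have two distinct neighbours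
(connectedness and `|V| ≥ 3` provide one). If `y ≠ v` is adjacent to a neighbour `x` of `v` but not
to `v`, pick another neighbour `w` of `v`; then `w ≁ x` (no triangle), and `v, w, y, x` span an
induced `C₄` if `w ∼ y` and `w, v, x, y` an induced `P₄` otherwise. Hence, by connectedness, `v`
is adjacent to every other vertex, and triangle-freeness leaves no other edges: `S` is the star
`K_{1,n}` with `n = |V| - 1 ≥ 2`. As `K_{1,2} ≅ P₃`, the excluded cases force `n ≥ 5`, so `S`
contains `K_{1,5}`. -/

open SimpleGraph

namespace SimpleGraph

variable {V : Type*} {G : SimpleGraph V}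

lemma pathGraph_four_isIndContained {a b c d : V} (hab : G.Adj a b) (hbc : G.Adj b c)
    (hcd : G.Adj c d) (hac : ¬G.Adj a c) (hbd : ¬G.Adj b d) (had : ¬G.Adj a d) :
    pathGraph 4 ⊴ G := by
  have hac' : a ≠ c := by rintro rfl; exact had hcd
  have had' : a ≠ d := by rintro rfl; exact hac hcd.symm
  have hbd' : b ≠ d := by rintro rfl; exact had hab
  refine ⟨⟨⟨![a, b, c, d], fun i j h => ?_⟩, fun {i j} => ?_⟩⟩
  · fin_cases i <;> fin_cases j <;> simp_all [hab.ne, hbc.ne, hcd.ne, eq_comm]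
  · change G.Adj (![a, b, c, d] i) (![a, b, c, d] j) ↔ _
    fin_cases i <;> fin_cases j <;> simp [pathGraph_adj, hab, hbc, hcd, hac, hbd, had, adj_comm]

lemma cycleGraph_four_isIndContained {a b c d : V} (hab : G.Adj a b) (hbc : G.Adj b c)
    (hcd : G.Adj c d) (hda : G.Adj d a) (hac : ¬G.Adj a c) (hbd : ¬G.Adj b d)
    (hac' : a ≠ c) (hbd' : b ≠ d) : cycleGraph 4 ⊴ G := by
  refine ⟨⟨⟨![a, b, c, d], fun i j h => ?_⟩, fun {i j} => ?_⟩⟩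
  · fin_cases i <;> fin_cases j <;> simp_all [hab.ne, hbc.ne, hcd.ne, hda.ne, eq_comm]
  · change G.Adj (![a, b, c, d] i) (![a, b, c, d] j) ↔ _
    fin_cases i <;> fin_cases j <;>
      simp [cycleGraph_adj, hab, hbc, hcd, hda.symm, hac, hbd, adj_comm] <;> decide

def completeBipartiteGraphIsoStarGraph [DecidableEq V] (v : V) :
    completeBipartiteGraph Unit {u // u ≠ v} ≃g starGraph v where
  toEquiv := (Equiv.sumComm _ _).trans (Equiv.subtypeNeSumPUnit v)
  map_rel_iff' := by
    rintro (_ | ⟨a, ha⟩) (_ | ⟨b, hb⟩) <;> simp [Equiv.subtypeNeSumPUnit] <;> grind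

noncomputable def starGraphIsoOfCardEq [Fintype V] [DecidableEq V] (v : V) {n : ℕ}
    (h : Fintype.card V = n + 1) : starGraph v ≃g completeBipartiteGraph (Fin 1) (Fin n) :=
  have hcard : Fintype.card {u // u ≠ v} = n := by simp [h]
  ((completeBipartiteGraphCongr (Equiv.ofUnique (Fin 1) Unit)
    (Fintype.equivFinOfCardEq hcard).symm).trans (completeBipartiteGraphIsoStarGraph v)).symm

lemma completeBipartiteGraph_isIndContained {α β γ δ : Type*} (f : α ↪ γ) (g : β ↪ δ) :
    completeBipartiteGraph α β ⊴ completeBipartiteGraph γ δ :=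
  ⟨⟨f.sumMap g, by rintro (a | b) (a' | b') <;> simp⟩⟩

lemma pathGraph_three_eq_starGraph : pathGraph 3 = starGraph 1 := by
  ext a b
  fin_cases a <;> fin_cases b <;> simp [pathGraph_adj]

lemma Preconnected.exists_adj_mem_notMem (hG : G.Preconnected) {s : Set V} {u w : V}
    (hu : u ∈ s) (hw : w ∉ s) : ∃ x ∈ s, ∃ y ∉ s, G.Adj x y := by
  obtain ⟨d, -, hd⟩ := (hG u w).some.exists_boundary_dart s hu hw
  exact ⟨d.fst, hd.1, d.snd, hd.2, d.adj⟩

lemma Preconnected.exists_adj_adj_ne [Fintype V] (hG : G.Preconnected)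
    (hV : 2 < Fintype.card V) : ∃ v a b, G.Adj v a ∧ G.Adj v b ∧ a ≠ b := by
  classical
  have : Nontrivial V := Fintype.one_lt_card_iff_nontrivial.1 (by omega)
  obtain ⟨a⟩ : Nonempty V := inferInstance
  obtain ⟨x, hax⟩ := hG.exists_adj_of_nontrivial a
  obtain ⟨c, -, hc⟩ := Finset.exists_mem_notMem_of_card_lt_card (t := Finset.univ)
    ((Finset.card_le_two (a := a) (b := x)).trans_lt hV)
  obtain ⟨y, hy, z, hz, hyz⟩ := hG.exists_adj_mem_notMem (s := {a, x}) (w := c)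
    (Set.mem_insert a _) (by simpa using hc)
  simp only [Set.mem_insert_iff, Set.mem_singleton_iff, not_or] at hy hz
  rcases hy with rfl | rfl
  · exact ⟨y, x, z, hax, hyz, Ne.symm hz.2⟩
  · exact ⟨y, a, z, hax.symm, hyz, Ne.symm hz.1⟩

lemma adj_of_adj_of_adj_of_free (hK3 : G.CliqueFree 3) (hP4 : ¬pathGraph 4 ⊴ G)
    (hC4 : ¬cycleGraph 4 ⊴ G) {v w x y : V} (hvw : G.Adj v w) (hvx : G.Adj v x) (hwx : w ≠ x)
    (hxy : G.Adj x y) (hyv : y ≠ v) : G.Adj v y := by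
  classical
  by_contra hvy
  have hwx' : ¬G.Adj w x := fun h => hK3 {v, w, x} (is3Clique_triple_iff.2 ⟨hvw, hvx, h⟩)
  by_cases hwy : G.Adj w y
  · exact hC4 (cycleGraph_four_isIndContained hvw hwy hxy.symm hvx.symm hvy hwx'
      hyv.symm hwx)
  · exact hP4 (pathGraph_four_isIndContained hvw.symm hvx hxy hwx' hvy hwy)

lemma Preconnected.isUniversal_of_free (hG : G.Preconnected) (hK3 : G.CliqueFree 3)
    (hP4 : ¬pathGraph 4 ⊴ G) (hC4 : ¬cycleGraph 4 ⊴ G) {v a b : V} (hva : G.Adj v a)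
    (hvb : G.Adj v b) (hab : a ≠ b) : G.IsUniversal v := by
  intro u hvu
  by_contra hu
  obtain ⟨x, hx, y, hy, hxy⟩ := hG.exists_adj_mem_notMem (s := {x | x = v ∨ G.Adj v x})
    (u := v) (w := u) (Or.inl rfl) (by simp [hu, Ne.symm hvu])
  simp only [Set.mem_ofPred_eq, not_or] at hx hy
  rcases hx with rfl | hvx
  · exact hy.2 hxy
  obtain ⟨w, hvw, hwx⟩ : ∃ w, G.Adj v w ∧ w ≠ x := by
    by_cases hax : a = x
    · exact ⟨b, hvb, hax ▸ hab.symm⟩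
    · exact ⟨a, hva, hax⟩
  exact hy.2 (adj_of_adj_of_adj_of_free hK3 hP4 hC4 hvw hvx hwx hxy hy.1)

lemma eq_starGraph_of_isUniversal (hK3 : G.CliqueFree 3) {v : V} (hv : G.IsUniversal v) :
    G = starGraph v := by
  classical
  ext a b
  rw [starGraph_adj]
  constructor
  · intro hab
    refine ⟨hab.ne, ?_⟩
    by_contra! hne
    exact hK3 {v, a, b} (is3Clique_triple_iff.2 ⟨hv hne.1.symm, hv hne.2.symm, hab⟩)
  · rintro ⟨hab, rfl | rfl⟩
    exacts [hv hab, (hv hab.symm).symm]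

lemma Preconnected.exists_eq_starGraph_of_free [Fintype V] (hG : G.Preconnected)
    (hV : 2 < Fintype.card V) (hK3 : G.CliqueFree 3) (hP4 : ¬pathGraph 4 ⊴ G)
    (hC4 : ¬cycleGraph 4 ⊴ G) : ∃ v, G = starGraph v := by
  obtain ⟨v, a, b, hva, hvb, hab⟩ := hG.exists_adj_adj_ne hV
  exact ⟨v, eq_starGraph_of_isUniversal hK3 (hG.isUniversal_of_free hK3 hP4 hC4 hva hvb hab)⟩

end SimpleGraph

theorem stmt_16 {V : Type*} [Fintype V] [DecidableEq V] (S : SimpleGraph V)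
    (hconn : S.Connected) (hcard : 3 ≤ Fintype.card V)
    (hP3 : ¬ Nonempty (S ≃g pathGraph 3))
    (hK13 : ¬ Nonempty (S ≃g completeBipartiteGraph (Fin 1) (Fin 3)))
    (hK14 : ¬ Nonempty (S ≃g completeBipartiteGraph (Fin 1) (Fin 4))) :
    Nonempty ((⊤ : SimpleGraph (Fin 3)) ↪g S) ∨
    Nonempty (pathGraph 4 ↪g S) ∨
    Nonempty (cycleGraph 4 ↪g S) ∨
    Nonempty (completeBipartiteGraph (Fin 1) (Fin 5) ↪g S) := by
  by_contra h
  simp only [not_or] at h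
  obtain ⟨hK3, hP4, hC4, hK15⟩ := h
  have hK3' : S.CliqueFree 3 := of_not_not fun h =>
    hK3 (top_isIndContained_iff_top_isContained.2 ((not_cliqueFree_iff_top_isContained 3).1 h))
  obtain ⟨v, rfl⟩ := hconn.preconnected.exists_eq_starGraph_of_free hcard hK3' hP4 hC4
  obtain ⟨n, hn⟩ : ∃ n, Fintype.card V = n + 1 := ⟨Fintype.card V - 1, by omega⟩
  let e := starGraphIsoOfCardEq v hn
  have hn2 : 2 ≤ n := by omega
  have hn4 : n ≤ 4 := by
    by_contra! h
    exact hK15 ((completeBipartiteGraph_isIndContained (Equiv.refl _).toEmbedding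
      (Fin.castLEEmb h)).trans e.symm.isIndContained)
  interval_cases n
  · rw [pathGraph_three_eq_starGraph] at hP3
    exact hP3 ⟨e.trans (starGraphIsoOfCardEq 1 rfl).symm⟩
  · exact hK13 ⟨e⟩
  · exact hK14 ⟨e⟩
end

section
/- If G is a 2-connected graph on n vertices such that every induced subgraph of G isomorphic to P_3 contains two nonadjacent vertices with degree sum at least n, then G is Hamiltonian. -/
open SimpleGraph

/-- A graph is 2-connected if it has at least 3 vertices and deleting any vertex
leaves a connected graph. -/
def TwoConnected {V : Type*} [Fintype V] (G : SimpleGraph V) : Prop :=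
  3 ≤ Fintype.card V ∧ ∀ v : V, (G.induce {u | u ≠ v}).Connected

section Helpers

open Finset
set_option linter.unusedSectionVars false
set_option linter.unusedVariables false
set_option maxHeartbeats 1000000

variable {V : Type*} [DecidableEq V] [Fintype V]

namespace SimpleGraph.Walk
lemma IsPath.getVert_inj' {G : SimpleGraph V} {u v : V} {p : G.Walk u v} (hp : p.IsPath)
    {i j : ℕ} (hi : i ≤ p.length) (hj : j ≤ p.length) (h : p.getVert i = p.getVert j) : i = j := by
  induction p generalizing i j with
  | nil => simp only [Walk.length_nil, Nat.le_zero] at hi hj; omega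
  | cons ha q ih =>
    rw [cons_isPath_iff] at hp
    match i, j with
    | 0, 0 => rfl
    | 0, j+1 =>
      exfalso; apply hp.2
      rw [getVert_zero, getVert_cons_succ] at h
      rw [mem_support_iff_exists_getVert]
      exact ⟨j, h.symm, by simpa using hj⟩
    | i+1, 0 =>
      exfalso; apply hp.2
      rw [getVert_zero, getVert_cons_succ] at h
      rw [mem_support_iff_exists_getVert]
      exact ⟨i, h, by simpa using hi⟩
    | i+1, j+1 =>
      have := ih hp.1 (by simpa using hi) (by simpa using hj) (by simpa using h)
      omega
end SimpleGraph.Walk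

namespace SimpleGraph.Walk


lemma first_edge' {G : SimpleGraph V} {x u y : V} (p : G.Walk x u) (hp : p.IsPath)
    (he : s(x,y) ∈ p.edges) : p.getVert 1 = y := by
  cases p with
  | nil => simp at he
  | cons h q =>
    rename_i b
    rw [Walk.edges_cons, List.mem_cons] at he
    rcases he with he | he
    · rw [Sym2.eq_iff] at he
      rcases he with ⟨-, rfl⟩ | ⟨rfl, rfl⟩
      · simp
      · exact absurd h (G.irrefl)
    · exfalso
      rw [Walk.cons_isPath_iff] at hp
      exact hp.2 (q.fst_mem_support_of_mem_edges he)

lemma IsHamiltonianCycle.rotate' {G : SimpleGraph V} {a x : V} {p : G.Walk a a}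
    (hp : p.IsHamiltonianCycle) (hx : x ∈ p.support) :
    (p.rotate x hx).IsHamiltonianCycle := by
  rw [isHamiltonianCycle_iff_isCycle_and_support_count_tail_eq_one]
  refine ⟨hp.isCycle.rotate hx, ?_⟩
  intro v
  have hperm : ((p.rotate x hx).support.tail).Perm (p.support.tail) :=
    (p.support_rotate x hx).perm
  rw [hperm.count_eq]
  have := hp.isHamiltonian_tail v
  rwa [Walk.support_tail_of_not_nil _ hp.isCycle.not_nil] at this

end SimpleGraph.Walk


/-- From a Hamiltonian cycle through the edge x-y, extract a Hamiltonian path from x to y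
avoiding that edge. -/
lemma ham_path_of_cycle {G : SimpleGraph V} {x y : V} (hxy : x ≠ y) {c : G.Walk x x}
    (hc : c.IsHamiltonianCycle) (he : s(x,y) ∈ c.edges) :
    ∃ P : G.Walk x y, P.IsHamiltonian ∧ s(x,y) ∉ P.edges := by
  cases c with
  | nil => exact absurd rfl hc.isCycle.ne_nil
  | cons h q =>
    rename_i b
    have hq : q.IsPath ∧ s(x, b) ∉ q.edges := (Walk.cons_isCycle_iff q h).1 hc.isCycle
    have hqcount : ∀ v, q.support.count v = 1 := by
      intro v
      have := hc.isHamiltonian_tail v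
      rwa [Walk.support_tail_of_not_nil _ hc.isCycle.not_nil, Walk.support_cons, List.tail_cons] at this
    rw [Walk.edges_cons, List.mem_cons] at he
    rcases he with he | he
    · -- first edge is s(x,y), so b = y
      have hby : b = y := by
        rw [Sym2.eq_iff] at he
        rcases he with ⟨-, h2⟩ | ⟨h1, -⟩
        · exact h2.symm
        · exact absurd (h1 ▸ h) G.irrefl
      subst hby
      refine ⟨q.reverse, ?_, ?_⟩
      · intro v
        rw [Walk.support_reverse, List.count_reverse]
        exact hqcount v
      · rw [Walk.edges_reverse, List.mem_reverse]
        have h2 := hq.2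
        rw [Sym2.eq_swap] at h2
        rwa [Sym2.eq_swap]
    · -- edge inside q
      have hyb : y ≠ b := by
        rintro rfl
        exact hq.2 he
      set r := q.reverse with hr
      have hrpath : r.IsPath := hq.1.reverse
      have hre : s(x,y) ∈ r.edges := by
        rw [hr, Walk.edges_reverse, List.mem_reverse]; exact he
      have hr1 : r.getVert 1 = y := r.first_edge' hrpath hre
      have hrnil : ¬ r.Nil := Walk.not_nil_of_ne (G.ne_of_adj h)
      -- r : Walk x b with first vertex step to y
      -- P := cons h (r.tail reversed appropriately)
      have hradj : G.Adj x y := hr1 ▸ r.adj_snd hrnil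
      let rt : G.Walk y b := r.tail.copy hr1 rfl
      let P : G.Walk x y := Walk.cons h rt.reverse
      have hredges : r.edges = s(x, r.getVert 1) :: r.tail.edges := by
        conv_lhs => rw [← Walk.cons_tail_eq r hrnil]
        rfl
      have hrnodup : r.edges.Nodup := by
        rw [hr, Walk.edges_reverse]
        exact List.nodup_reverse.2 hq.1.edges_nodup
      have hP : P.IsHamiltonian ∧ s(x,y) ∉ P.edges := by
        constructor
        · intro v
          have hsupp : P.support = x :: (rt.reverse.support) := by
            simp [P]
          have hrt : rt.reverse.support = (r.support.tail).reverse := by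
            rw [Walk.support_reverse]
            congr 1
            simp only [rt, Walk.support_copy]
            exact Walk.support_tail_of_not_nil r hrnil
          have hcount_q : q.support.count v = 1 := hqcount v
          have hcount_r : r.support.count v = 1 := by
            rw [hr, Walk.support_reverse, List.count_reverse]; exact hcount_q
          have hrcons : r.support = x :: r.support.tail := Walk.support_eq_cons r
          rw [hsupp, hrt]
          rw [hrcons] at hcount_r
          by_cases hv : v = x
          · subst hv
            rw [List.count_cons_self] at hcount_r ⊢
            rw [List.count_reverse]
            omega
          · rw [List.count_cons_of_ne (Ne.symm hv)] at hcount_r ⊢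
            rw [List.count_reverse]
            exact hcount_r
        · intro hmem
          simp only [P, Walk.edges_cons, Walk.edges_copy, Walk.edges_reverse,
            List.mem_cons, List.mem_reverse] at hmem
          rcases hmem with hmem | hmem
          · rw [Sym2.eq_iff] at hmem
            rcases hmem with ⟨-, h2⟩ | ⟨h1, -⟩
            · exact hyb h2
            · exact absurd (h1 ▸ h) G.irrefl
          · -- s(x,y) ∈ rt.edges = r.tail.edges, but it's the head of r.edges which is nodup
            have hmem' : s(x,y) ∈ r.tail.edges := by
              simpa [rt, Walk.edges_copy] using hmem
            rw [hredges] at hrnodup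
            have heq : s(x,y) = s(x, r.getVert 1) := by rw [hr1]
            rw [heq] at hmem'
            exact (List.nodup_cons.1 hrnodup).1 hmem'
      exact ⟨P, hP.1, hP.2⟩

lemma degree_mono {G G' : SimpleGraph V} [DecidableRel G.Adj] [DecidableRel G'.Adj]
    (hle : G ≤ G') (v : V) : G.degree v ≤ G'.degree v := by
  apply Finset.card_le_card
  intro u hu
  simp only [mem_neighborFinset] at hu ⊢
  exact hle hu


lemma closed_complete (G G' : SimpleGraph V) [DecidableRel G.Adj] [DecidableRel G'.Adj]
    (hle : G ≤ G') (hconn : G.Connected)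
    (hP3 : ∀ a b c : V, G.Adj a b → G.Adj b c → a ≠ c → ¬ G.Adj a c →
      Fintype.card V ≤ G.degree a + G.degree c)
    (hclosed : ∀ x y : V, x ≠ y → ¬ G'.Adj x y →
      G'.degree x + G'.degree y < Fintype.card V) :
    ∀ z w : V, z ≠ w → G'.Adj z w := by
  have key : ∀ D : ℕ, ∀ z w : V, z ≠ w → G.dist z w ≤ D → G'.Adj z w := by
    intro D
    induction D with
    | zero =>
      intro z w hzw hD
      have := hconn.pos_dist_of_ne hzw
      omega
    | succ D ih =>
      intro z w hzw hD
      rcases Nat.lt_or_ge (G.dist z w) (D+1) with hlt | hge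
      · exact ih z w hzw (Nat.lt_succ_iff.1 hlt)
      have hd : G.dist z w = D + 1 := le_antisymm hD hge
      obtain ⟨p, hpath, hplen⟩ := hconn.exists_path_of_dist z w
      rw [hd] at hplen
      rcases Nat.lt_or_ge D 1 with hD1 | hD1
      · interval_cases D
        exact hle (dist_eq_one_iff_adj.1 hd)
      rcases Nat.lt_or_ge D 2 with hD2 | hD2
      · -- dist = 2
        interval_cases D
        have hm1 : G.Adj z (p.getVert 1) := by
          have := p.adj_getVert_succ (i := 0) (by omega)
          simpa using this
        have hgv2 : p.getVert 2 = w := by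
          have h := p.getVert_length
          rwa [show p.length = 2 by omega] at h
        have hm2 : G.Adj (p.getVert 1) w := by
          have := p.adj_getVert_succ (i := 1) (by omega)
          rwa [hgv2] at this
        have hnadj : ¬ G.Adj z w := by
          intro h
          have := (dist_eq_one_iff_adj (G := G)).2 h
          omega
        have hsum := hP3 z (p.getVert 1) w hm1 hm2 hzw hnadj
        by_contra hne
        have := hclosed z w hzw hne
        have h1 := degree_mono hle z
        have h2 := degree_mono hle w
        omega
      -- now dist = D + 1 ≥ 3
      set v1 := p.getVert 1 with hv1
      set v2 := p.getVert 2 with hv2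
      set v3 := p.getVert 3 with hv3
      have hzv1 : G.Adj z v1 := by
        have := p.adj_getVert_succ (i := 0) (by omega)
        simpa using this
      have h12 : G.Adj v1 v2 := p.adj_getVert_succ (by omega)
      have h23 : G.Adj v2 v3 := p.adj_getVert_succ (by omega)
      have hne13 : v1 ≠ v3 := by
        intro h
        have := hpath.getVert_inj' (i := 1) (j := 3) (by omega) (by omega) h
        omega
      have hv3mem : v3 ∈ p.support := by
        rw [Walk.mem_support_iff_exists_getVert]
        exact ⟨3, rfl, by omega⟩
      set tU := p.takeUntil v3 hv3mem with htU
      set dU := p.dropUntil v3 hv3mem with hdU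
      have hsplit : tU.append dU = p := p.take_spec hv3mem
      have hlensum : tU.length + dU.length = D + 1 := by
        have := congr_arg Walk.length hsplit
        rwa [Walk.length_append, hplen] at this
      have htUlen : tU.length = 3 := by
        have hgv : p.getVert tU.length = v3 := by
          have h0 : (tU.append dU).getVert tU.length = v3 := by
            rw [Walk.getVert_append]
            simp
          rwa [hsplit] at h0
        exact hpath.getVert_inj' (by omega) (by omega) (by rw [hgv])
      have hdUlen : dU.length = D - 2 := by omega
      have hdistv3w : G.dist v3 w ≤ D - 2 := by
        have := dist_le dU
        omega
      have hnadj13 : ¬ G.Adj v1 v3 := by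
        intro h
        have := dist_le (Walk.cons hzv1 (Walk.cons h dU))
        simp only [Walk.length_cons] at this
        omega
      have hdegz : G.degree v1 ≤ G'.degree z := by
        have hsub : insert v1 (G.neighborFinset v1 \ {z}) ⊆ G'.neighborFinset z := by
          intro u hu
          simp only [Finset.mem_insert, Finset.mem_sdiff, Finset.mem_singleton,
            mem_neighborFinset] at hu ⊢
          rcases hu with rfl | ⟨hu1, hu2⟩
          · exact hle hzv1
          · apply ih z u (fun h => hu2 h.symm)
            calc G.dist z u ≤ G.dist z v1 + G.dist v1 u := hconn.dist_triangle
              _ ≤ 1 + 1 := by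
                  gcongr
                  · exact le_of_eq (dist_eq_one_iff_adj.2 hzv1)
                  · exact le_of_eq (dist_eq_one_iff_adj.2 hu1)
              _ ≤ D := by omega
        have hzmem : z ∈ G.neighborFinset v1 := by
          simp [mem_neighborFinset, hzv1.symm]
        have hcard : (insert v1 (G.neighborFinset v1 \ {z})).card = G.degree v1 := by
          rw [Finset.card_insert_of_notMem (by simp),
            Finset.sdiff_singleton_eq_erase, Finset.card_erase_of_mem hzmem,
            card_neighborFinset_eq_degree]
          have : 0 < G.degree v1 := by
            rw [← card_neighborFinset_eq_degree]
            exact Finset.card_pos.2 ⟨z, hzmem⟩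
          omega
        calc G.degree v1 = _ := hcard.symm
          _ ≤ (G'.neighborFinset z).card := Finset.card_le_card hsub
          _ = G'.degree z := card_neighborFinset_eq_degree _ _
      have hdegw : G.degree v3 ≤ G'.degree w := by
        have hsub : (insert v3 (G.neighborFinset v3)) \ {w} ⊆ G'.neighborFinset w := by
          intro u hu
          simp only [Finset.mem_sdiff, Finset.mem_insert, Finset.mem_singleton,
            mem_neighborFinset] at hu ⊢
          obtain ⟨hu1, hu2⟩ := hu
          refine (ih w u (fun h => hu2 h.symm) ?_)
          have hdu : G.dist v3 u ≤ 1 := by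
            rcases hu1 with rfl | hadj
            · rw [SimpleGraph.dist_self]; omega
            · exact le_of_eq (dist_eq_one_iff_adj.2 hadj)
          calc G.dist w u ≤ G.dist w v3 + G.dist v3 u := hconn.dist_triangle
            _ ≤ (D - 2) + 1 := by
                gcongr
                rwa [SimpleGraph.dist_comm]
            _ ≤ D := by omega
        have hcard : G.degree v3 ≤ ((insert v3 (G.neighborFinset v3)) \ {w}).card := by
          have h1 : (insert v3 (G.neighborFinset v3)).card = G.degree v3 + 1 := by
            rw [Finset.card_insert_of_notMem (by simp), card_neighborFinset_eq_degree]
          rw [Finset.sdiff_singleton_eq_erase]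
          by_cases hw : w ∈ insert v3 (G.neighborFinset v3)
          · rw [Finset.card_erase_of_mem hw]; omega
          · rw [Finset.erase_eq_of_notMem hw]; omega
        calc G.degree v3 ≤ _ := hcard
          _ ≤ (G'.neighborFinset w).card := Finset.card_le_card hsub
          _ = G'.degree w := card_neighborFinset_eq_degree _ _
      have hsum := hP3 v1 v2 v3 h12 h23 hne13 hnadj13
      by_contra hne
      have := hclosed z w hzw hne
      omega
  intro z w hzw
  exact key (G.dist z w) z w hzw le_rfl

/-- build a walk along a list in a graph where all distinct vertices are adjacent -/
lemma walk_of_list {G : SimpleGraph V} (hadj : ∀ x y : V, x ≠ y → G.Adj x y) :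
    ∀ (l : List V) (hl : l ≠ []) (a : V), a ∉ l → l.Nodup →
      ∃ p : G.Walk a (l.getLast hl), p.support = a :: l := by
  intro l
  induction l with
  | nil => simp
  | cons b t ih =>
    intro hl a ha hnd
    rcases List.eq_nil_or_concat t with rfl | _
    · have hab : a ≠ b := by simp at ha; tauto
      exact ⟨Walk.cons (hadj a b hab) Walk.nil, by simp⟩
    · have ht : t ≠ [] := by rintro rfl; simp_all
      have hnd' := hnd
      simp only [List.nodup_cons] at hnd'
      obtain ⟨p, hp⟩ := ih ht b hnd'.1 hnd'.2
      have hab : a ≠ b := by simp at ha; tauto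
      refine ⟨(Walk.cons (hadj a b hab) p).copy rfl (by rw [List.getLast_cons ht]), ?_⟩
      simp [hp]


lemma hamiltonian_of_complete {G : SimpleGraph V} (h3 : 3 ≤ Fintype.card V)
    (hadj : ∀ x y : V, x ≠ y → G.Adj x y) : G.IsHamiltonian := by
  intro _
  classical
  have hlen : (Finset.univ : Finset V).toList.length = Fintype.card V := by
    simp [Finset.length_toList]
  have hnd : (Finset.univ : Finset V).toList.Nodup := Finset.nodup_toList _
  obtain ⟨a, b, t, huniv⟩ : ∃ a b t, (Finset.univ : Finset V).toList = a :: b :: t := by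
    match hu : (Finset.univ : Finset V).toList with
    | [] => rw [hu] at hlen; simp at hlen; omega
    | [a] => rw [hu] at hlen; simp at hlen; omega
    | a :: b :: t => exact ⟨a, b, t, rfl⟩
  obtain ⟨c, t', rfl⟩ : ∃ c t', t = c :: t' := by
    match ht : t with
    | [] => rw [huniv] at hlen; simp at hlen; omega
    | c :: t' => exact ⟨c, t', rfl⟩
  rw [huniv] at hnd
  simp only [List.nodup_cons, List.mem_cons] at hnd
  have hmemuniv : ∀ v : V, v ∈ ([a, b, c] ++ t' : List V) := by
    intro v
    have : v ∈ (Finset.univ : Finset V).toList := by simp [Finset.mem_toList]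
    rw [huniv] at this; simpa using this
  -- build walk from c through t' ++ [a]
  have hc : c ∉ t' ++ [a] := by
    simp only [List.mem_append, List.mem_singleton]
    push_neg
    refine ⟨hnd.2.2.1, ?_⟩
    rintro rfl; exact hnd.1 (Or.inr (Or.inl rfl))
  have hndl : (t' ++ [a]).Nodup := by
    refine List.Nodup.append hnd.2.2.2 (List.nodup_singleton a) ?_
    intro x hx hxa
    simp only [List.mem_singleton] at hxa; subst hxa
    exact hnd.1 (Or.inr (Or.inr hx))
  obtain ⟨w2, hw2⟩ := walk_of_list hadj (t' ++ [a]) (by simp) c hc hndl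
  have hlast : (t' ++ [a]).getLast (by simp) = a := by
    simp [List.getLast_append]
  have hbc : b ≠ c := fun h => hnd.2.1 (h ▸ Or.inl rfl)
  have hab : a ≠ b := fun h => hnd.1 (Or.inl h)
  have hac : a ≠ c := fun h => hnd.1 (Or.inr (Or.inl h))
  let w2' : G.Walk c a := w2.copy rfl hlast
  have hw2' : w2'.support = c :: (t' ++ [a]) := by simpa [w2'] using hw2
  let w : G.Walk b a := Walk.cons (hadj b c hbc) w2'
  have hwsupp : w.support = b :: c :: (t' ++ [a]) := by simp [w, hw2']
  let q : G.Walk a a := Walk.cons (hadj a b hab) w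
  have hq : q.IsCycle := by
    rw [Walk.cons_isCycle_iff]
    constructor
    · apply Walk.IsPath.mk'
      rw [hwsupp]
      have : (b :: c :: (t' ++ [a])) = (b :: c :: t') ++ [a] := by simp
      rw [this]
      refine List.Nodup.append ?_ (List.nodup_singleton a) ?_
      · exact List.nodup_cons.2 ⟨fun h => hnd.2.1 (List.mem_cons.1 h), List.nodup_cons.2 ⟨hnd.2.2.1, hnd.2.2.2⟩⟩
      · intro x hx hxa
        simp only [List.mem_singleton] at hxa; subst hxa
        simp only [List.mem_cons] at hx
        exact hnd.1 (by tauto)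
    · intro hmem
      simp only [w, Walk.edges_cons, List.mem_cons] at hmem
      rcases hmem with h | h
      · rw [Sym2.eq_iff] at h; tauto
      · have : b ∈ w2'.support := Walk.snd_mem_support_of_mem_edges w2' (by rwa [Sym2.eq_swap] at h)
        rw [hw2'] at this
        simp only [List.mem_cons, List.mem_append, List.mem_singleton] at this
        tauto
  refine ⟨a, q, hq, ?_⟩
  intro v
  have htail : q.tail.support = w.support := by
    simp only [q, Walk.tail_cons, Walk.support_copy]
    rfl
  rw [htail, hwsupp]
  have hperm : List.Perm (b :: c :: (t' ++ [a])) ([a, b, c] ++ t' : List V) := by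
    have h1 : (b :: c :: (t' ++ [a])) = (b :: c :: t') ++ [a] := by simp
    have h2 : ([a, b, c] ++ t' : List V) = [a] ++ (b :: c :: t') := by simp
    rw [h1, h2]
    exact List.perm_append_comm
  rw [hperm.count_eq]
  have hndfull : ([a, b, c] ++ t' : List V).Nodup := by
    have := Finset.nodup_toList (Finset.univ : Finset V)
    rw [huniv] at this; simpa using this
  exact List.count_eq_one_of_mem hndfull (hmemuniv v)

lemma cycle_of_ham_path (G : SimpleGraph V) [DecidableRel G.Adj]
    (h3 : 3 ≤ Fintype.card V) {x y : V} (hxy : x ≠ y) (hnadj : ¬ G.Adj x y)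
    (hdeg : Fintype.card V ≤ G.degree x + G.degree y)
    (P : G.Walk x y) (hP : P.IsHamiltonian) :
    ∃ a, ∃ c : G.Walk a a, c.IsHamiltonianCycle := by
  have hpath := hP.isPath
  have hlen : P.length = Fintype.card V - 1 := hP.length_eq
  set n := Fintype.card V with hn
  set L := P.length with hL
  have hL2 : 2 ≤ L := by omega
  -- neighbor index sets
  set S := (Finset.range L).filter (fun i => G.Adj x (P.getVert (i+1))) with hS
  set T := (Finset.range L).filter (fun i => G.Adj y (P.getVert i)) with hT
  have hcardS : S.card = G.degree x := by
    apply Finset.card_bij (fun i _ => P.getVert (i+1))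
    · intro i hi
      rw [hS, Finset.mem_filter] at hi
      rw [mem_neighborFinset]
      exact hi.2
    · intro i hi j hj hij
      rw [hS, Finset.mem_filter, Finset.mem_range] at hi hj
      have := hpath.getVert_inj' (by omega : i+1 ≤ P.length) (by omega) hij
      omega
    · intro u hu
      rw [mem_neighborFinset] at hu
      have humem : u ∈ P.support := hP.mem_support u
      rw [Walk.mem_support_iff_exists_getVert] at humem
      obtain ⟨j, hj1, hj2⟩ := humem
      have hj0 : j ≠ 0 := by
        rintro rfl
        rw [Walk.getVert_zero] at hj1
        exact G.irrefl (hj1 ▸ hu)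
      refine ⟨j - 1, ?_, ?_⟩
      · rw [hS, Finset.mem_filter, Finset.mem_range]
        rw [show j - 1 + 1 = j by omega, hj1]
        exact ⟨by omega, hu⟩
      · rw [show j - 1 + 1 = j by omega, hj1]
  have hcardT : T.card = G.degree y := by
    apply Finset.card_bij (fun i _ => P.getVert i)
    · intro i hi
      rw [hT, Finset.mem_filter] at hi
      rw [mem_neighborFinset]
      exact hi.2
    · intro i hi j hj hij
      rw [hT, Finset.mem_filter, Finset.mem_range] at hi hj
      exact hpath.getVert_inj' (by omega) (by omega) hij
    · intro u hu
      rw [mem_neighborFinset] at hu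
      have humem : u ∈ P.support := hP.mem_support u
      rw [Walk.mem_support_iff_exists_getVert] at humem
      obtain ⟨j, hj1, hj2⟩ := humem
      have hjL : j ≠ L := by
        rintro rfl
        rw [hL, Walk.getVert_length] at hj1
        exact G.irrefl (hj1 ▸ hu)
      exact ⟨j, by rw [hT, Finset.mem_filter, Finset.mem_range]; exact ⟨by omega, hj1 ▸ hu⟩, hj1⟩
  -- S ∩ T nonempty
  have hunion : (S ∪ T).card ≤ L := by
    calc (S ∪ T).card ≤ (Finset.range L).card := by
          apply Finset.card_le_card
          intro i hi
          rw [Finset.mem_union, hS, hT, Finset.mem_filter, Finset.mem_filter] at hi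
          rcases hi with h | h <;> exact h.1
      _ = L := Finset.card_range L
  obtain ⟨i, hiST⟩ : (S ∩ T).Nonempty := by
    rw [← Finset.card_pos]
    have := Finset.card_inter_add_card_union S T
    omega
  rw [Finset.mem_inter] at hiST
  obtain ⟨hiS, hiT⟩ := hiST
  rw [hS, Finset.mem_filter, Finset.mem_range] at hiS
  rw [hT, Finset.mem_filter, Finset.mem_range] at hiT
  have hiL := hiS.1
  have hadj_xw : G.Adj x (P.getVert (i+1)) := hiS.2
  have hadj_yu : G.Adj y (P.getVert i) := hiT.2
  have hi0 : i ≠ 0 := by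
    rintro rfl
    rw [Walk.getVert_zero] at hadj_yu
    exact hnadj hadj_yu.symm
  have hi1L : i + 1 ≠ L := by
    intro h
    rw [h, hL, Walk.getVert_length] at hadj_xw
    exact hnadj hadj_xw
  set u := P.getVert i with hu
  set w := P.getVert (i+1) with hw
  have humem : u ∈ P.support := by
    rw [Walk.mem_support_iff_exists_getVert]; exact ⟨i, rfl, by omega⟩
  set A := P.takeUntil u humem with hA
  set D := P.dropUntil u humem with hD
  have hsplit : A.append D = P := P.take_spec humem
  have hAlen : A.length = i := by
    have hgv : P.getVert A.length = u := by
      have h0 : (A.append D).getVert A.length = u := by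
        rw [Walk.getVert_append]; simp
      rwa [hsplit] at h0
    have h1 : A.length ≤ P.length := P.length_takeUntil_le humem
    exact hpath.getVert_inj' (by omega) (by omega) hgv
  have hlensum : A.length + D.length = L := by
    have := congr_arg Walk.length hsplit
    rwa [Walk.length_append] at this
  have hDnil : ¬ D.Nil := by
    rw [Walk.nil_iff_length_eq]
    omega
  have hDgv1 : D.getVert 1 = w := by
    have h0 : (A.append D).getVert (i+1) = D.getVert 1 := by
      rw [Walk.getVert_append, if_neg (by omega)]
      congr 1
      omega
    rw [hsplit] at h0
    exact h0.symm
  -- the support counts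
  have hsuppP : P.support = A.support ++ D.support.tail := by
    rw [← hsplit, Walk.support_append]
  have hPcount : ∀ v, P.support.count v = 1 := hP
  -- the crossover cycle
  have hadj_yu' : G.Adj y u := hadj_yu
  let tailD : G.Walk w y := D.tail.copy hDgv1 rfl
  let Q : G.Walk w x := tailD.append (Walk.cons hadj_yu' A.reverse)
  let C : G.Walk x x := Walk.cons hadj_xw Q
  have hsuppQ : Q.support = D.support.tail ++ A.support.reverse := by
    rw [show Q = tailD.append (Walk.cons hadj_yu' A.reverse) from rfl, Walk.support_append]
    congr 1
    · show tailD.support = D.support.tail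
      rw [show tailD = D.tail.copy hDgv1 rfl from rfl, Walk.support_copy]
      exact Walk.support_tail_of_not_nil D hDnil
    · rw [Walk.support_cons, List.tail_cons, Walk.support_reverse]
  have hQcount : ∀ v, Q.support.count v = 1 := by
    intro v
    rw [hsuppQ, List.count_append, List.count_reverse]
    have := hPcount v
    rw [hsuppP, List.count_append] at this
    omega
  have hQpath : Q.IsPath := by
    apply Walk.IsPath.mk'
    rw [List.nodup_iff_count_le_one]
    intro v
    exact le_of_eq (hQcount v)
  -- x not in D.support.tail ; w not in A.support
  have hxA : x ∈ A.support := A.start_mem_support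
  have hxD : x ∉ D.support.tail := by
    have := hPcount x
    rw [hsuppP, List.count_append] at this
    have hxA' : 1 ≤ A.support.count x := List.one_le_count_iff.2 hxA
    rw [← List.count_pos_iff]
    omega
  have hwD : w ∈ D.support.tail := by
    have : w ∈ D.tail.support := by
      have := (D.tail.copy hDgv1 rfl).start_mem_support
      rwa [Walk.support_copy] at this
    rwa [Walk.support_tail_of_not_nil D hDnil] at this
  have hwA : w ∉ A.support := by
    have := hPcount w
    rw [hsuppP, List.count_append] at this
    have h1 : 1 ≤ List.count w D.support.tail := List.one_le_count_iff.2 hwD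
    rw [← List.count_pos_iff]
    omega
  have hxu : x ≠ u := by
    intro h
    have h0 : P.getVert 0 = P.getVert i := by rw [Walk.getVert_zero, ← hu, ← h]
    have := hpath.getVert_inj' (i := 0) (j := i) (by omega) (by omega) h0
    omega
  have hCcycle : C.IsCycle := by
    rw [show C = Walk.cons hadj_xw Q from rfl, Walk.cons_isCycle_iff]
    refine ⟨hQpath, ?_⟩
    intro hmem
    rw [show Q = tailD.append (Walk.cons hadj_yu' A.reverse) from rfl, Walk.edges_append,
      List.mem_append, Walk.edges_cons, List.mem_cons] at hmem
    rcases hmem with hmem | hmem | hmem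
    · -- s(x,w) in tailD.edges : x would be in its support
      have : x ∈ tailD.support := Walk.fst_mem_support_of_mem_edges tailD hmem
      rw [show tailD = D.tail.copy hDgv1 rfl from rfl, Walk.support_copy,
        Walk.support_tail_of_not_nil D hDnil] at this
      exact hxD this
    · rw [Sym2.eq_iff] at hmem
      rcases hmem with ⟨h1, -⟩ | ⟨h1, h2⟩
      · exact hxy h1
      · exact hxu h1
    · have : w ∈ A.reverse.support := Walk.snd_mem_support_of_mem_edges A.reverse
        (by rwa [Sym2.eq_swap] at hmem ⊢)
      rw [Walk.support_reverse, List.mem_reverse] at this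
      exact hwA this
  refine ⟨x, C, ?_⟩
  rw [SimpleGraph.Walk.isHamiltonianCycle_iff_isCycle_and_support_count_tail_eq_one]
  refine ⟨hCcycle, ?_⟩
  intro v
  have : C.support.tail = Q.support := by
    rw [show C = Walk.cons hadj_xw Q from rfl, Walk.support_cons, List.tail_cons]
  rw [this]
  exact hQcount v

lemma ore_step (G : SimpleGraph V) [DecidableRel G.Adj] (h3 : 3 ≤ Fintype.card V)
    {x y : V} (hxy : x ≠ y) (hnadj : ¬ G.Adj x y)
    (hdeg : Fintype.card V ≤ G.degree x + G.degree y)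
    (hH : (G ⊔ SimpleGraph.edge x y).IsHamiltonian) : G.IsHamiltonian := by
  intro hne1
  obtain ⟨a, c, hc⟩ := hH hne1
  by_cases he : s(x,y) ∈ c.edges
  · -- cycle uses the new edge: get hamiltonian path and do the crossover
    have hx : x ∈ c.support := Walk.fst_mem_support_of_mem_edges c he
    have hc' := hc.rotate' hx
    have he' : s(x,y) ∈ (c.rotate x hx).edges := ((c.rotate_edges x hx).perm.mem_iff).2 he
    obtain ⟨P, hPham, hPe⟩ := ham_path_of_cycle hxy hc' he'
    have hsubP : ∀ e ∈ P.edges, e ∈ G.edgeSet := by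
      intro e hee
      have h1 := P.edges_subset_edgeSet hee
      rw [edgeSet_sup] at h1
      rcases h1 with h1 | h1
      · exact h1
      · rw [edge_edgeSet_of_ne hxy] at h1
        rw [Set.mem_singleton_iff] at h1
        exact absurd (h1 ▸ hee) hPe
    set PG := P.transfer G hsubP with hPG
    have hPGham : PG.IsHamiltonian := by
      intro v
      rw [hPG, Walk.support_transfer]
      exact hPham v
    exact cycle_of_ham_path G h3 hxy hnadj hdeg PG hPGham
  · -- cycle avoids the new edge: transfer directly
    have hsub : ∀ e ∈ c.edges, e ∈ G.edgeSet := by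
      intro e hee
      have h1 := c.edges_subset_edgeSet hee
      rw [edgeSet_sup] at h1
      rcases h1 with h1 | h1
      · exact h1
      · rw [edge_edgeSet_of_ne hxy] at h1
        rw [Set.mem_singleton_iff] at h1
        exact absurd (h1 ▸ hee) he
    refine ⟨a, c.transfer G hsub, ?_⟩
    rw [SimpleGraph.Walk.isHamiltonianCycle_iff_isCycle_and_support_count_tail_eq_one]
    refine ⟨hc.isCycle.transfer hsub, ?_⟩
    intro v
    rw [Walk.support_transfer]
    have := hc.isHamiltonian_tail v
    rwa [Walk.support_tail_of_not_nil _ hc.isCycle.not_nil] at this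


end Helpers

set_option maxHeartbeats 1000000 in
theorem stmt_17 {V : Type*} [Fintype V] [DecidableEq V] (G : SimpleGraph V)
    [DecidableRel G.Adj] (hG : TwoConnected G)
    (hP3 : ∀ a b c : V, G.Adj a b → G.Adj b c → a ≠ c → ¬ G.Adj a c →
      Fintype.card V ≤ G.degree a + G.degree c) :
    G.IsHamiltonian := by
  classical
  obtain ⟨h3, hdel⟩ := hG
  -- G is connected
  have hconn : G.Connected := by
    rw [connected_iff]
    constructor
    · intro u v
      by_cases huv : u = v
      · exact huv ▸ Reachable.refl u
      · obtain ⟨w, hw⟩ : ∃ w : V, w ≠ u ∧ w ≠ v := by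
          have hcard : 1 ≤ (Finset.univ \ {u, v} : Finset V).card := by
            have h1 : ({u, v} : Finset V).card ≤ 2 := by
              apply le_trans (Finset.card_insert_le _ _)
              simp
            have h2 := Finset.card_sdiff_of_subset (Finset.subset_univ ({u, v} : Finset V))
            rw [Finset.card_univ] at h2
            omega
          have hne : (Finset.univ \ {u, v} : Finset V).Nonempty :=
            Finset.card_pos.1 (by omega)
          obtain ⟨w, hw⟩ := hne
          rw [Finset.mem_sdiff, Finset.mem_insert, Finset.mem_singleton] at hw
          exact ⟨w, fun h => hw.2 (Or.inl h), fun h => hw.2 (Or.inr h)⟩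
        have hc := hdel w
        have hr := hc.preconnected ⟨u, hw.1.symm⟩ ⟨v, hw.2.symm⟩
        have := hr.map (SimpleGraph.Embedding.induce {z : V | z ≠ w}).toHom
        simpa using this
    · exact Fintype.card_pos_iff.1 (by omega)
  -- main induction on the number of missing edges
  have main : ∀ k : ℕ, ∀ G' : SimpleGraph V, ∀ _inst : DecidableRel G'.Adj, G ≤ G' →
      G'ᶜ.edgeFinset.card ≤ k → G'.IsHamiltonian := by
    intro k
    induction k with
    | zero =>
      intro G' _inst hle hcard
      apply hamiltonian_of_complete h3
      intro a b hab
      by_contra hnadj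
      have : s(a,b) ∈ G'ᶜ.edgeFinset := by
        rw [mem_edgeFinset, mem_edgeSet, compl_adj]
        exact ⟨hab, hnadj⟩
      have := Finset.card_pos.2 ⟨s(a,b), this⟩
      omega
    | succ k ih =>
      intro G' _inst hle hcard
      by_cases hcomp : ∀ a b : V, a ≠ b → G'.Adj a b
      · exact hamiltonian_of_complete h3 hcomp
      · have hex : ¬ (∀ a b : V, a ≠ b → ¬ G'.Adj a b →
            G'.degree a + G'.degree b < Fintype.card V) := by
          intro hclosed
          exact hcomp (closed_complete G G' hle hconn hP3 hclosed)
        push_neg at hex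
        obtain ⟨a, b, hab, hnadj, hdeg⟩ := hex
        apply ore_step G' h3 hab hnadj hdeg
        apply ih (G' ⊔ SimpleGraph.edge a b) (by infer_instance) (le_trans hle le_sup_left)
        -- missing-edge count decreases
        have hmem : s(a,b) ∈ G'ᶜ.edgeFinset := by
          rw [mem_edgeFinset, mem_edgeSet, compl_adj]
          exact ⟨hab, hnadj⟩
        have hsub : (G' ⊔ SimpleGraph.edge a b)ᶜ.edgeFinset ⊆ G'ᶜ.edgeFinset.erase s(a,b) := by
          intro f hf
          induction f with
          | h c d =>
            rw [mem_edgeFinset, mem_edgeSet, compl_adj, sup_adj] at hf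
            obtain ⟨hcd, hf2⟩ := hf
            push_neg at hf2
            rw [Finset.mem_erase, mem_edgeFinset, mem_edgeSet, compl_adj]
            refine ⟨?_, hcd, hf2.1⟩
            intro heq
            rw [Sym2.eq_iff] at heq
            apply hf2.2
            rw [edge_adj]
            rcases heq with ⟨rfl, rfl⟩ | ⟨rfl, rfl⟩
            · exact ⟨Or.inl ⟨rfl, rfl⟩, hcd⟩
            · exact ⟨Or.inr ⟨rfl, rfl⟩, hcd⟩
        have hcard2 := Finset.card_le_card hsub
        rw [Finset.card_erase_of_mem hmem] at hcard2
        have hpos := Finset.card_pos.2 ⟨s(a,b), hmem⟩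
        omega
  have h := main Gᶜ.edgeFinset.card G ‹DecidableRel G.Adj› le_rfl
  exact h le_rfl
end
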